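/- arXiv:0706.1567 — 6 statements merged into one kernel-verified Lean document; each statement's English description precedes it below -/
import Mathlib

section
/- Let A be the n×n 0–1 circulant with residue set {a_1, ..., a_k} ⊆ ℤ/nℤ (i.e., A = S^{a_1} + ... + S^{a_k} where S is the cyclic shift). Then the number of times k² occurs as an eigenvalue of A·Aᵀ (with multiplicity) equals gcd(n, g), where g = gcd of all differences a_i − a_j for 1 ≤ i, j ≤ k. -/
/-!
The characters `x ↦ ψ (x * r)` of `ZMod n` (with `ψ = ZMod.stdAddChar`) are common eigenvectors
of all circulant matrices, so the Fourier matrix diagonalises `A` and `Aᵀ` simultaneously and the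
eigenvalues of `A Aᵀ` are `|∑_{a ∈ 𝒜} ψ (a r)|² = ∑_{a, b ∈ 𝒜} ψ ((a - b) r)`. A sum of `k²`
complex numbers of norm one equals `k²` only if every term is `1`, i.e. only if
`(a - b) r = 0` for all `a, b ∈ 𝒜`, which says `g • r = 0`. In the cyclic group `ZMod n` the kernel
of `r ↦ g • r` has `gcd n g` elements.
-/

open Polynomial Matrix Finset

lemma Finset.gcd_nsmul_eq_zero_iff {ι G : Type*} [AddMonoid G] (s : Finset ι) (f : ι → ℕ)
    (x : G) : s.gcd f • x = 0 ↔ ∀ i ∈ s, f i • x = 0 := by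
  simp only [← addOrderOf_dvd_iff_nsmul_eq_zero, Finset.dvd_gcd_iff]

lemma Complex.eq_one_of_re_eq_one_of_norm_le_one {z : ℂ} (hre : z.re = 1) (hz : ‖z‖ ≤ 1) :
    z = 1 := by
  have him : z.im = 0 :=
    abs_re_eq_norm.mp (le_antisymm (abs_re_le_norm z) (by simpa [hre] using hz))
  exact Complex.ext hre him

lemma Complex.sum_eq_card_iff_forall_eq_one {ι : Type*} {s : Finset ι} {z : ι → ℂ}
    (hz : ∀ i ∈ s, ‖z i‖ ≤ 1) : ∑ i ∈ s, z i = #s ↔ ∀ i ∈ s, z i = 1 := by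
  refine ⟨fun hsum i hi => ?_, fun h => by simp [Finset.sum_congr rfl h]⟩
  have hre_le : ∀ i ∈ s, (z i).re ≤ 1 := fun i hi => (re_le_norm _).trans (hz i hi)
  have hre : ∑ i ∈ s, (z i).re = ∑ _i ∈ s, (1 : ℝ) := by
    simpa [re_sum] using congrArg re hsum
  exact eq_one_of_re_eq_one_of_norm_le_one ((sum_eq_sum_iff_of_le hre_le).mp hre i hi) (hz i hi)

lemma Polynomial.rootMultiplicity_prod_X_sub_C {ι R : Type*} [CommRing R] [IsDomain R]
    [DecidableEq R] (s : Finset ι) (d : ι → R) (c : R) :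
    (∏ i ∈ s, (X - C (d i))).rootMultiplicity c = #{i ∈ s | d i = c} := by
  have h : ∏ i ∈ s, (X - C (d i)) = ((s.val.map d).map fun a => X - C a).prod := by
    rw [Multiset.map_map]; rfl
  rw [← count_roots, h, roots_multiset_prod_X_sub_C, Multiset.count_map]
  simp only [eq_comm, Finset.card_def, Finset.filter_val]

namespace Matrix

variable {ι R : Type*} [Fintype ι] [DecidableEq ι] [CommRing R]

lemma charpoly_eq_of_mul_eq_mul {M D P : Matrix ι ι R} (hP : IsUnit P) (h : M * P = P * D) :
    M.charpoly = D.charpoly := by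
  obtain ⟨u, rfl⟩ := hP
  have hM : M = u.val * D * u.val⁻¹ := by
    rw [← h, ← coe_units_inv, mul_assoc, u.mul_inv, mul_one]
  rw [hM, charpoly_units_conj]

lemma rootMultiplicity_charpoly_of_mul_eq_mul_diagonal [IsDomain R] [DecidableEq R]
    {M P : Matrix ι ι R} {d : ι → R} (hP : IsUnit P) (h : M * P = P * diagonal d) (c : R) :
    M.charpoly.rootMultiplicity c = #{i | d i = c} := by
  rw [charpoly_eq_of_mul_eq_mul hP h, charpoly_diagonal, rootMultiplicity_prod_X_sub_C]

end Matrix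

namespace ZMod

variable {N : ℕ} [NeZero N]

lemma card_filter_nsmul_eq_zero (g : ℕ) : #{r : ZMod N | g • r = 0} = N.gcd g := by
  have hker := IsAddCyclic.card_nsmulAddMonoidHom_ker (ZMod N) g
  rw [Nat.card_zmod, Nat.card_eq_fintype_card, Fintype.card_subtype] at hker
  simpa using hker

lemma norm_stdAddChar (x : ZMod N) : ‖stdAddChar x‖ = 1 := by
  rw [stdAddChar_apply, Circle.norm_coe]

lemma sum_stdAddChar_mul_eq_card_iff {ι : Type*} (s : Finset ι) (f : ι → ZMod N) (r : ZMod N) :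
    ∑ i ∈ s, stdAddChar (f i * r) = #s ↔ s.gcd (fun i => (f i).val) • r = 0 := by
  rw [Complex.sum_eq_card_iff_forall_eq_one fun i _ => (norm_stdAddChar _).le,
    Finset.gcd_nsmul_eq_zero_iff]
  refine forall₂_congr fun i _ => ?_
  rw [← AddChar.map_zero_eq_one (stdAddChar (N := N)), injective_stdAddChar.eq_iff,
    nsmul_eq_mul, natCast_zmod_val]

noncomputable def fourierMatrix : Matrix (ZMod N) (ZMod N) ℂ := of fun i j => stdAddChar (i * j)

lemma fourierMatrix_mul_conjTranspose :
    fourierMatrix * fourierMatrixᴴ = (N : ℂ) • (1 : Matrix (ZMod N) (ZMod N) ℂ) := by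
  ext i j
  have hterm : ∀ l, stdAddChar (i * l) * star (stdAddChar (j * l)) = stdAddChar (l * (i - j)) := by
    intro l
    rw [← starRingEnd_apply, ← AddChar.map_neg_eq_conj, ← AddChar.map_add_eq_mul]
    ring_nf
  simp only [fourierMatrix, mul_apply, conjTranspose_apply, of_apply, hterm,
    AddChar.sum_mulShift _ (isPrimitive_stdAddChar N), sub_eq_zero, Matrix.smul_apply, card]
  rcases eq_or_ne i j with rfl | hij <;> simp [*]

lemma isUnit_fourierMatrix : IsUnit (fourierMatrix (N := N)) :=
  IsUnit.of_mul_eq_one ((N : ℂ)⁻¹ • fourierMatrixᴴ) <| by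
    rw [mul_smul_comm, fourierMatrix_mul_conjTranspose, smul_smul, inv_mul_cancel₀ (NeZero.ne _),
      one_smul]

lemma circulant_mul_fourierMatrix (v : ZMod N → ℂ) :
    circulant v * fourierMatrix = fourierMatrix * diagonal (𝓕 v) := by
  ext i j
  rw [mul_apply, mul_diagonal, dft_apply, Finset.mul_sum,
    ← Fintype.sum_equiv (Equiv.subLeft i) _ _ (fun _ => rfl)]
  refine Finset.sum_congr rfl fun x _ => ?_
  simp only [circulant_apply, fourierMatrix, of_apply, Equiv.subLeft_apply, sub_sub_cancel,
    smul_eq_mul]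
  rw [sub_mul, sub_eq_add_neg, AddChar.map_add_eq_mul]
  ring

lemma dft_indicator (s : Finset (ZMod N)) (k : ZMod N) :
    𝓕 (fun x => if x ∈ s then (1 : ℂ) else 0) k = ∑ a ∈ s, stdAddChar (-(a * k)) := by
  simp [dft_apply, Finset.sum_ite_mem]

lemma dft_indicator_neg_mul_dft_indicator (s : Finset (ZMod N)) (r : ZMod N) :
    𝓕 (fun x => if x ∈ s then (1 : ℂ) else 0) (-r) * 𝓕 (fun x => if x ∈ s then (1 : ℂ) else 0) r
      = ∑ p ∈ s ×ˢ s, stdAddChar ((p.1 - p.2) * r) := by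
  rw [dft_indicator, dft_indicator, Finset.sum_mul_sum, Finset.sum_product]
  refine Finset.sum_congr rfl fun a _ => Finset.sum_congr rfl fun b _ => ?_
  rw [← AddChar.map_add_eq_mul]
  ring_nf

end ZMod

open ZMod

/-- The multiplicity of `k²` as an eigenvalue of `A Aᵀ`, for `A` the 0–1
circulant with residue set `𝒜` of size `k`, equals `gcd(n, g)` where `g`
is the gcd of all differences of elements of `𝒜`. -/
theorem eigenvalue_ksq_multiplicity (n : ℕ) [NeZero n] (𝒜 : Finset (ZMod n))
    (A : Matrix (ZMod n) (ZMod n) ℂ)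
    (hA : ∀ i j : ZMod n, A i j = if (j - i) ∈ 𝒜 then 1 else 0) :
    ((A * A.transpose).charpoly).rootMultiplicity ((𝒜.card : ℂ) ^ 2)
      = Nat.gcd n (Finset.gcd (𝒜 ×ˢ 𝒜) fun p => (p.1 - p.2).val) := by
  set w : ZMod n → ℂ := fun x => if x ∈ 𝒜 then 1 else 0
  have hA' : A = circulant fun x => w (-x) := by ext i j; simp [hA, w, circulant_apply]
  have hAt : Aᵀ = circulant w := by ext i j; simp [hA, w, circulant_apply]
  have hdiag : A * Aᵀ * fourierMatrix = fourierMatrix * diagonal fun r => 𝓕 w (-r) * 𝓕 w r := by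
    rw [hAt, hA', mul_assoc, circulant_mul_fourierMatrix, ← mul_assoc,
      circulant_mul_fourierMatrix, mul_assoc, diagonal_mul_diagonal, dft_comp_neg]
  have hk : (#𝒜 : ℂ) ^ 2 = #(𝒜 ×ˢ 𝒜) := by rw [card_product]; push_cast; ring
  rw [rootMultiplicity_charpoly_of_mul_eq_mul_diagonal isUnit_fourierMatrix hdiag]
  simp_rw [w, dft_indicator_neg_mul_dft_indicator, hk, sum_stdAddChar_mul_eq_card_iff]
  exact card_filter_nsmul_eq_zero _
end

section
/- The number of affine equivalence classes of subsets of ℤ/nℤ of size exactly 2 equals τ(n) − 1, where τ(n) is the number of positive divisors of n. -/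
/-- Affine equivalence of subsets of `ℤ/nℤ`. -/
def AffEquiv (n : ℕ) (𝒜 ℬ : Finset (ZMod n)) : Prop :=
  ∃ u v : ZMod n, IsUnit u ∧ ℬ = 𝒜.image fun a => u * a + v

section Aux

variable {n : ℕ} [NeZero n]

private lemma gcd_val_mod (a : ℕ) : Nat.gcd n (a % n) = Nat.gcd n a := by
  rw [Nat.gcd_rec n (a % n), Nat.gcd_rec n a, Nat.mod_mod_of_dvd a dvd_rfl]

/-- Multiplying by a unit does not change the gcd of the value with `n`. -/
private lemma gcd_val_unit_mul {u : ZMod n} (hu : IsUnit u) (x : ZMod n) :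
    Nat.gcd n ((u * x).val) = Nat.gcd n x.val := by
  obtain ⟨w, rfl⟩ := hu
  rw [ZMod.val_mul, gcd_val_mod,
    Nat.Coprime.gcd_mul_left_cancel_right _ (ZMod.val_coe_unit_coprime w)]

/-- Every element of `ZMod n` is a unit multiple of `gcd n x.val`. -/
private lemma exists_unit_mul_eq_gcd (x : ZMod n) :
    ∃ u : ZMod n, IsUnit u ∧ u * x = ((Nat.gcd n x.val : ℕ) : ZMod n) := by
  set g := Nat.gcd n x.val with hgdef
  have hg0 : 0 < g := Nat.gcd_pos_of_pos_left _ (NeZero.pos n)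
  have hgd : g ∣ n := Nat.gcd_dvd_left _ _
  set m := n / g with hmdef
  have hmn : m ∣ n := Nat.div_dvd_of_dvd hgd
  have hgm : g * m = n := Nat.mul_div_cancel' hgd
  have hm0 : NeZero m := ⟨by
    intro h
    have := hgm
    rw [h, mul_zero] at this
    exact (NeZero.ne n) this.symm⟩
  set k := x.val / g with hkdef
  have hgk : g * k = x.val := Nat.mul_div_cancel' (Nat.gcd_dvd_right n x.val)
  have hco : Nat.Coprime m k := Nat.coprime_div_gcd_div_gcd hg0
  obtain ⟨U, hU⟩ := ZMod.unitsMap_surjective hmn (ZMod.unitOfCoprime k hco.symm)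
  have h1 : (((U : ZMod n).val : ℕ) : ZMod m) = (k : ZMod m) := by
    have := congrArg (fun z : (ZMod m)ˣ => (z : ZMod m)) hU
    simp only [ZMod.unitsMap_def, Units.coe_map, MonoidHom.coe_coe, ZMod.castHom_apply,
      ZMod.coe_unitOfCoprime] at this
    rw [ZMod.natCast_val, this]
  have hmod : (U : ZMod n).val ≡ k [MOD m] := (ZMod.natCast_eq_natCast_iff _ _ _).mp h1
  have hmul : g * (U : ZMod n).val ≡ g * k [MOD n] := by
    have := Nat.ModEq.mul_left' (c := g) hmod
    rwa [hgm] at this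
  have hcast : ((g : ℕ) : ZMod n) * (U : ZMod n) = x := by
    have h2 : ((g * (U : ZMod n).val : ℕ) : ZMod n) = ((g * k : ℕ) : ZMod n) :=
      (ZMod.natCast_eq_natCast_iff _ _ _).mpr hmul
    rw [hgk] at h2
    push_cast at h2
    rwa [ZMod.natCast_val, ZMod.natCast_val, ZMod.cast_id, ZMod.cast_id] at h2
  refine ⟨((U⁻¹ : (ZMod n)ˣ) : ZMod n), (U⁻¹).isUnit, ?_⟩
  rw [← hcast, ← mul_assoc, mul_comm ((U⁻¹ : (ZMod n)ˣ) : ZMod n), mul_assoc,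
    Units.inv_mul, mul_one]

/-- The invariant: `gcd n` of the value of the difference over all pairs. -/
private def Gfun (n : ℕ) (s : Finset (ZMod n)) : ℕ :=
  Nat.gcd n (s.gcd fun a => s.gcd fun b => (a - b).val)

private lemma Gfun_pair {a b : ZMod n} (hab : a ≠ b) :
    Gfun n {a, b} = Nat.gcd n ((a - b).val) := by
  have hd' : Nat.gcd n ((b - a).val) = Nat.gcd n ((a - b).val) := by
    have h : (-1 : ZMod n) * (a - b) = b - a := by ring
    rw [← h, gcd_val_unit_mul isUnit_one.neg]
  have hgg : ∀ x y : ZMod n, gcd x.val y.val = Nat.gcd x.val y.val := fun _ _ => rfl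
  simp only [Gfun, Finset.gcd_insert, Finset.gcd_singleton, sub_self, ZMod.val_zero,
    normalize_eq]
  have e1 : gcd (0 : ℕ) ((a - b).val) = (a - b).val := by simp
  have e2 : gcd ((b - a).val) (0 : ℕ) = (b - a).val := by simp
  rw [e1, e2]
  have : gcd ((a - b).val) ((b - a).val) = Nat.gcd ((a - b).val) ((b - a).val) := rfl
  rw [this, ← Nat.gcd_assoc]
  exact Nat.gcd_eq_left (hd' ▸ Nat.gcd_dvd_right n ((b - a).val))

private lemma Gfun_pair' {a b : ZMod n} (hab : a ≠ b) :
    Gfun n {a, b} = Nat.gcd n ((a - b).val) := Gfun_pair hab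

private lemma Gfun_affEquiv {s t : Finset (ZMod n)} (hs : s.card = 2)
    (h : AffEquiv n s t) : Gfun n t = Gfun n s := by
  classical
  obtain ⟨a, b, hab, rfl⟩ := Finset.card_eq_two.mp hs
  obtain ⟨u, v, hu, rfl⟩ := h
  have himg : ({a, b} : Finset (ZMod n)).image (fun x => u * x + v)
      = {u * a + v, u * b + v} := by
    simp [Finset.image_insert, Finset.image_singleton]
  have hne : u * a + v ≠ u * b + v := by
    intro hcontra
    apply hab
    obtain ⟨w, rfl⟩ := hu
    have : (w : ZMod n) * a = (w : ZMod n) * b := by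
      have := add_right_cancel hcontra
      exact this
    have := congrArg (fun z => ((w⁻¹ : (ZMod n)ˣ) : ZMod n) * z) this
    simpa [← mul_assoc, Units.inv_mul] using this
  rw [himg, Gfun_pair hne, Gfun_pair hab]
  have hdiff : (u * a + v) - (u * b + v) = u * (a - b) := by ring
  rw [hdiff, gcd_val_unit_mul hu]

private lemma Gfun_mem_properDivisors {s : Finset (ZMod n)} (hs : s.card = 2) :
    Gfun n s ∈ n.properDivisors := by
  classical
  obtain ⟨a, b, hab, rfl⟩ := Finset.card_eq_two.mp hs
  rw [Gfun_pair hab]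
  have hdne : a - b ≠ 0 := sub_ne_zero.mpr hab
  have hval0 : (a - b).val ≠ 0 := fun h => hdne ((ZMod.val_eq_zero _).mp h)
  refine Nat.mem_properDivisors.mpr ⟨Nat.gcd_dvd_left _ _, ?_⟩
  calc Nat.gcd n ((a - b).val) ≤ (a - b).val :=
        Nat.le_of_dvd (Nat.pos_of_ne_zero hval0) (Nat.gcd_dvd_right _ _)
    _ < n := ZMod.val_lt _

end Aux

/-- The number of affine equivalence classes of 2-element subsets of
`ℤ/nℤ` is `τ(n) - 1`. -/
theorem card_affine_classes_weight_two (n : ℕ) [NeZero n] :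
    Nat.card (Quot fun s t : {s : Finset (ZMod n) // s.card = 2} =>
      AffEquiv n s.1 t.1) = n.divisors.card - 1 := by
  classical
  set r := fun s t : {s : Finset (ZMod n) // s.card = 2} => AffEquiv n s.1 t.1 with hr
  let F : Quot r → {d : ℕ // d ∈ n.properDivisors} :=
    Quot.lift (fun s => ⟨Gfun n s.1, Gfun_mem_properDivisors s.2⟩)
      (fun s t h => Subtype.ext (Gfun_affEquiv s.2 h).symm)
  have hinj : Function.Injective F := by
    intro q1 q2
    refine Quot.inductionOn q1 fun s => ?_
    refine Quot.inductionOn q2 fun t => ?_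
    intro hFeq
    have hG : Gfun n s.1 = Gfun n t.1 := by
      have := congrArg Subtype.val hFeq
      simpa only [F] using this
    apply Quot.sound
    obtain ⟨a, b, hab, hs⟩ := Finset.card_eq_two.mp s.2
    obtain ⟨c, d, hcd, ht⟩ := Finset.card_eq_two.mp t.2
    obtain ⟨u, hu, hu2⟩ := exists_unit_mul_eq_gcd (a - b)
    obtain ⟨w, hw, hw2⟩ := exists_unit_mul_eq_gcd (c - d)
    have hgeq : Nat.gcd n ((a - b).val) = Nat.gcd n ((c - d).val) := by
      rw [← Gfun_pair hab, ← Gfun_pair hcd, ← hs, ← ht, hG]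
    have heq : u * (a - b) = w * (c - d) := by rw [hu2, hw2, hgeq]
    obtain ⟨W, rfl⟩ := hw
    set U : ZMod n := ((W⁻¹ : (ZMod n)ˣ) : ZMod n) * u with hUdef
    have hUunit : IsUnit U := (W⁻¹).isUnit.mul hu
    have hUab : U * (a - b) = c - d := by
      rw [hUdef, mul_assoc, heq, ← mul_assoc, Units.inv_mul, one_mul]
    refine ⟨U, c - U * a, hUunit, ?_⟩
    rw [ht, hs]
    have himg : ({a, b} : Finset (ZMod n)).image (fun x => U * x + (c - U * a))
        = {U * a + (c - U * a), U * b + (c - U * a)} := by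
      simp [Finset.image_insert, Finset.image_singleton]
    rw [himg]
    have e1 : U * a + (c - U * a) = c := by ring
    have e2 : U * b + (c - U * a) = d := by linear_combination -hUab
    rw [e1, e2]
  have hsurj : Function.Surjective F := by
    rintro ⟨d, hd⟩
    rw [Nat.mem_properDivisors] at hd
    have hd0 : d ≠ 0 := by
      intro h
      rw [h] at hd
      exact (NeZero.ne n) (Nat.eq_zero_of_zero_dvd hd.1)
    have hvald : ((d : ZMod n)).val = d := ZMod.val_cast_of_lt hd.2
    have hdz : (0 : ZMod n) ≠ (d : ZMod n) := by
      intro h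
      apply hd0
      rw [← hvald, ← h, ZMod.val_zero]
    refine ⟨Quot.mk r ⟨({0, (d : ZMod n)} : Finset (ZMod n)), Finset.card_pair hdz⟩, ?_⟩
    apply Subtype.ext
    simp only [F]
    show Gfun n {0, (d : ZMod n)} = d
    rw [Gfun_pair hdz]
    have h1 : (0 : ZMod n) - (d : ZMod n) = (-1) * (d : ZMod n) := by ring
    rw [h1, gcd_val_unit_mul isUnit_one.neg, hvald]
    exact Nat.gcd_eq_right hd.1
  rw [Nat.card_eq_of_bijective F ⟨hinj, hsurj⟩, Nat.card_eq_finsetCard]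
  have hcons := Nat.cons_self_properDivisors (NeZero.ne n)
  have : n.divisors.card = n.properDivisors.card + 1 := by
    rw [← hcons, Finset.card_cons]
  omega
end

section
/- Let 𝒯 be a minimal vanishing sum of roots of unity of weight d with d prime, containing 1, and suppose d divides the lcm n of the orders of elements of 𝒯. Then 𝒯 consists of all d-th roots of unity, each with multiplicity one, and n = d. -/
/-!
Write `n = p ^ (b + 1) * m` with `p ∤ m` and fix primitive roots of unity `ζ` of order
`p ^ (b + 1)` and `ξ` of order `m`. Every `z ∈ T` factors as `ζ ^ e z * w z` with
`e z < p ^ (b + 1)` and `w z` an `m`-th root of unity, so `T.sum = 0` says that `ζ` is a root of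
`D = ∑ z ∈ T, w z X ^ e z`, a polynomial with coefficients in `ℚ(ξ)`. Since the orders are
coprime, the minimal polynomial of `ζ` over `ℚ(ξ)` is still `Φ_{p^(b+1)} = ∑ t < p, X ^ (t p^b)`,
which forces the coefficients of `D` to be `p ^ b`-periodic. Hence the `z` with `p ^ b ∣ e z` form
a vanishing subsum containing `1`, which by minimality is all of `T`. The constant coefficient of
`D` is nonzero, as otherwise the `m`-th roots of unity in `T` would form a vanishing subsum
containing `1`, contradicting `p ∣ n`. So each of the `p` classes `e z = t p^b` is nonempty; as `T`
has `p` elements, each class is a single point `(ζ ^ p^b) ^ t`.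
-/

open Polynomial IntermediateField Module

theorem IsPrimitiveRoot.minpoly_adjoin_eq_cyclotomic_of_coprime {L : Type*} [Field L] [CharZero L]
    {a m : ℕ} [NeZero a] [NeZero m] {ζ ξ : L} (hζ : IsPrimitiveRoot ζ a)
    (hξ : IsPrimitiveRoot ξ m) (hco : a.Coprime m) :
    minpoly ℚ⟮ξ⟯ ζ = cyclotomic a ℚ⟮ξ⟯ := by
  have hξint : IsIntegral ℚ ξ := (hξ.isIntegral (NeZero.pos m)).tower_top
  have hζint : IsIntegral ℚ⟮ξ⟯ ζ := (hζ.isIntegral (NeZero.pos a)).tower_top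
  have hdvd : minpoly ℚ⟮ξ⟯ ζ ∣ cyclotomic a ℚ⟮ξ⟯ := by
    refine minpoly.dvd _ _ ?_
    rw [aeval_def, eval₂_eq_eval_map, map_cyclotomic]
    exact hζ.isRoot_cyclotomic (NeZero.pos a)
  have : FiniteDimensional ℚ ℚ⟮ξ⟯ := adjoin.finiteDimensional hξint
  have : FiniteDimensional ℚ⟮ξ⟯ ℚ⟮ξ⟯⟮ζ⟯ := adjoin.finiteDimensional hζint
  have : FiniteDimensional ℚ ℚ⟮ξ⟯⟮ζ⟯ := FiniteDimensional.trans ℚ ℚ⟮ξ⟯ _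
  -- `ℚ⟮ξ⟯⟮ζ⟯` contains a primitive `a * m`-th root of unity, so has degree at least `φ (a * m)`.
  have hle := (IsPrimitiveRoot.coe_submonoidClass_iff.mp hζ :
      IsPrimitiveRoot (AdjoinSimple.gen ℚ⟮ξ⟯ ζ) a).lcm_totient_le_finrank
    ((IsPrimitiveRoot.coe_submonoidClass_iff.mp hξ :
      IsPrimitiveRoot (AdjoinSimple.gen ℚ ξ) m).map_of_injective
        (algebraMap ℚ⟮ξ⟯ ℚ⟮ξ⟯⟮ζ⟯).injective)
    (cyclotomic.irreducible_rat (Nat.lcm_pos (NeZero.pos a) (NeZero.pos m)))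
  have htower : finrank ℚ ℚ⟮ξ⟯ * finrank ℚ⟮ξ⟯ ℚ⟮ξ⟯⟮ζ⟯ = finrank ℚ ℚ⟮ξ⟯⟮ζ⟯ :=
    have : Module.Free ℚ⟮ξ⟯ ℚ⟮ξ⟯⟮ζ⟯ := Module.Free.of_divisionRing _ _
    finrank_mul_finrank ..
  rw [← htower, adjoin.finrank hζint, adjoin.finrank hξint,
    ← cyclotomic_eq_minpoly_rat hξ (NeZero.pos m), natDegree_cyclotomic, hco.lcm_eq_mul,
    Nat.totient_mul hco, mul_comm a.totient] at hle
  refine eq_of_monic_of_associated (minpoly.monic hζint) (cyclotomic.monic a _)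
    (associated_of_dvd_of_natDegree_le hdvd (cyclotomic_ne_zero a _) ?_)
  rw [natDegree_cyclotomic]
  exact Nat.le_of_mul_le_mul_left hle (Nat.totient_pos.2 (NeZero.pos m))

theorem Polynomial.coeff_mul_geom_sum_X_pow {R : Type*} [Semiring R] {Q : R[X]} {B p r t : ℕ}
    (hQ : Q.natDegree < B) (hr : r < B) (ht : t < p) :
    (Q * ∑ i ∈ Finset.range p, (X ^ B) ^ i).coeff (r + t * B) = Q.coeff r := by
  rw [Finset.mul_sum, finsetSum_coeff, Finset.sum_eq_single t]
  · rw [← pow_mul, coeff_mul_X_pow', if_pos (by nlinarith)]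
    congr 1
    rw [mul_comm]
    omega
  · intro i _ hit
    rw [← pow_mul, coeff_mul_X_pow']
    rcases lt_or_gt_of_ne hit with hlt | hgt
    · have : B * i + B ≤ t * B := by nlinarith
      rw [if_pos (by omega)]
      exact coeff_eq_zero_of_natDegree_lt (by omega)
    · have : t * B + B ≤ B * i := by nlinarith
      rw [if_neg (by omega)]
  · simp [ht]

theorem Polynomial.coeff_add_mul_prime_pow_eq_coeff {R : Type*} [CommRing R] {p b : ℕ}
    (hp : p.Prime) {D : R[X]} (hdvd : cyclotomic (p ^ (b + 1)) R ∣ D)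
    (hdeg : D.natDegree < p ^ (b + 1)) {r t : ℕ} (hr : r < p ^ b) (ht : t < p) :
    D.coeff (r + t * p ^ b) = D.coeff r := by
  nontriviality R
  obtain ⟨Q, rfl⟩ := hdvd
  rcases eq_or_ne Q 0 with rfl | hQ
  · simp
  have hQdeg : Q.natDegree < p ^ b := by
    have hmonic := cyclotomic.monic (p ^ (b + 1)) R
    rw [hmonic.natDegree_mul' hQ,
      natDegree_cyclotomic, Nat.totient_prime_pow_succ hp, pow_succ] at hdeg
    have : p ^ b * (p - 1) + p ^ b = p ^ b * p := by
      rw [← Nat.mul_succ, Nat.succ_eq_add_one, Nat.sub_add_cancel hp.one_le]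
    omega
  have h0 := coeff_mul_geom_sum_X_pow (p := p) hQdeg hr hp.pos
  rw [zero_mul, add_zero] at h0
  rw [mul_comm, cyclotomic_prime_pow_eq_geom_sum hp, coeff_mul_geom_sum_X_pow hQdeg hr ht, h0]

theorem Polynomial.coeff_add_mul_prime_pow_eq_coeff_of_lifts {K L : Type*} [Field K] [Field L]
    [Algebra K L] {p b : ℕ} (hp : p.Prime) {ζ : L}
    (hζ : minpoly K ζ = cyclotomic (p ^ (b + 1)) K) {D : L[X]}
    (hD : D ∈ lifts (algebraMap K L)) (hdeg : D.natDegree < p ^ (b + 1)) (hroot : D.eval ζ = 0)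
    {r t : ℕ} (hr : r < p ^ b) (ht : t < p) :
    D.coeff (r + t * p ^ b) = D.coeff r := by
  obtain ⟨D, rfl⟩ := (mem_lifts _).1 hD
  rw [natDegree_map] at hdeg
  rw [eval_map_algebraMap] at hroot
  rw [coeff_map, coeff_map,
    coeff_add_mul_prime_pow_eq_coeff hp (hζ ▸ minpoly.dvd K ζ hroot) hdeg hr ht]

namespace Polynomial

section MonomialSum

variable {α R : Type*} [Semiring R]

noncomputable def monomialSum (s : Multiset α) (e : α → ℕ) (w : α → R) : R[X] :=
  (s.map fun z => monomial (e z) (w z)).sum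

variable {s : Multiset α} {e : α → ℕ} {w : α → R}

theorem coeff_monomialSum (k : ℕ) :
    (monomialSum s e w).coeff k = ((s.filter (e · = k)).map w).sum := by
  classical
  induction s using Multiset.induction_on with
  | empty => simp [monomialSum]
  | cons a s ih =>
    simp only [monomialSum, Multiset.map_cons, Multiset.sum_cons, coeff_add, coeff_monomial,
      Multiset.filter_cons] at ih ⊢
    split_ifs <;> simp [ih]

theorem eval_monomialSum {A : Type*} [CommSemiring A] {v : α → A} (x : A) :
    (monomialSum s e v).eval x = (s.map fun z => v z * x ^ e z).sum := by
  simp [monomialSum, eval_multisetSum]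

theorem natDegree_monomialSum_lt {N : ℕ} (hN : 0 < N) (he : ∀ z ∈ s, e z < N) :
    (monomialSum s e w).natDegree < N := by
  have : (monomialSum s e w).natDegree ≤ N - 1 := by
    refine natDegree_le_iff_coeff_eq_zero.2 fun k hk => ?_
    rw [coeff_monomialSum, Multiset.filter_eq_nil.2 fun z hz hzk => by
      have := he z hz; omega]
    simp
  omega

theorem monomialSum_mem_lifts {S : Type*} [Semiring S] (f : S →+* R)
    (hw : ∀ z ∈ s, w z ∈ Set.range f) : monomialSum s e w ∈ lifts f :=
  Subsemiring.multiset_sum_mem _ _ fun _ hq => by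
    obtain ⟨z, hz, rfl⟩ := Multiset.mem_map.1 hq
    exact monomial_mem_lifts _ (hw z hz)

theorem coeff_monomialSum_filter_dvd {B : ℕ} (hB : 0 < B) (t : ℕ) :
    (monomialSum (s.filter (B ∣ e ·)) (e · / B) w).coeff t = (monomialSum s e w).coeff (t * B) := by
  rw [coeff_monomialSum, coeff_monomialSum, Multiset.filter_filter]
  congr 2
  refine Multiset.filter_congr fun z _ => ?_
  constructor
  · rintro ⟨rfl, hdvd⟩
    exact (Nat.div_mul_cancel hdvd).symm
  · intro h
    rw [h]
    exact ⟨Nat.mul_div_cancel _ hB, dvd_mul_left _ _⟩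

theorem map_eq_range_of_coeff_monomialSum_ne_zero {p : ℕ} (hcard : Multiset.card s = p)
    (hw : ∀ t < p, (monomialSum s e w).coeff t ≠ 0) : s.map e = Multiset.range p := by
  refine (Multiset.eq_of_le_of_card_le ((Multiset.le_iff_subset (Multiset.nodup_range p)).2
    fun t ht => ?_) (by simp [hcard])).symm
  have hne := hw t (Multiset.mem_range.1 ht)
  rw [coeff_monomialSum] at hne
  obtain ⟨z, hz⟩ := Multiset.exists_mem_of_ne_zero (s := s.filter (e · = t)) fun h => hne (by
    rw [h]; simp)
  obtain ⟨hzs, rfl⟩ := Multiset.mem_filter.1 hz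
  exact Multiset.mem_map_of_mem e hzs

theorem coeff_monomialSum_of_nodup (hs : (s.map e).Nodup) {z : α} (hz : z ∈ s) :
    (monomialSum s e w).coeff (e z) = w z := by
  classical
  have hcard : Multiset.card (s.filter (e · = e z)) = 1 := by
    rw [← Multiset.count_eq_one_of_mem hs (Multiset.mem_map_of_mem e hz), Multiset.count_map]
    simp_rw [eq_comm]
  obtain ⟨y, hy⟩ := Multiset.card_eq_one.1 hcard
  have : z = y := Multiset.mem_singleton.1 (hy ▸ Multiset.mem_filter.2 ⟨hz, rfl⟩)
  rw [coeff_monomialSum, hy, ← this]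
  simp

end MonomialSum

end Polynomial

theorem IsPrimitiveRoot.eval_eq_zero_of_coeff_eq {R : Type*} [CommRing R] [IsDomain R] {p : ℕ}
    (hp : 1 < p) {η : R} (hη : IsPrimitiveRoot η p) {E : R[X]} (hdeg : E.natDegree < p)
    (hE : ∀ t < p, E.coeff t = E.coeff 0) : E.eval η = 0 := by
  rw [eval_eq_sum_range' hdeg,
    Finset.sum_congr rfl fun t ht => by rw [hE t (Finset.mem_range.1 ht)], ← Finset.mul_sum,
    hη.geom_sum_eq_zero hp, mul_zero]

theorem Multiset.lcm_map_orderOf_dvd_iff {G : Type*} [Monoid G] {s : Multiset G} {k : ℕ} :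
    (s.map orderOf).lcm ∣ k ↔ ∀ z ∈ s, z ^ k = 1 := by
  simp [Multiset.lcm_dvd, orderOf_dvd_iff_pow_eq_one]

theorem Multiset.lcm_map_orderOf_ne_zero {G : Type*} [Monoid G] {s : Multiset G}
    (hs : ∀ z ∈ s, ∃ k, 0 < k ∧ z ^ k = 1) : (s.map orderOf).lcm ≠ 0 := by
  simp only [Ne, Multiset.lcm_eq_zero_iff, Multiset.mem_map, not_exists, not_and]
  intro z hz
  exact (isOfFinOrder_iff_pow_eq_one.2 (hs z hz)).orderOf_pos.ne'

section Decomposition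

variable {K : Type*} [Field K] {ζ : K} {a m : ℕ}

theorem IsPrimitiveRoot.exists_pow_mul_eq [NeZero a] (hζ : IsPrimitiveRoot ζ a)
    (hco : a.Coprime m) {z : K} (hz : z ^ (a * m) = 1) :
    ∃ k < a, ∃ w : K, w ^ m = 1 ∧ ζ ^ k * w = z := by
  obtain ⟨k, hk, hkz⟩ := (hζ.pow_of_coprime m hco.symm).eq_pow_of_pow_eq_one
    (by rw [← pow_mul, mul_comm, hz] : (z ^ m) ^ a = 1)
  have hζ0 : ζ ≠ 0 := hζ.ne_zero (NeZero.ne a)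
  refine ⟨k, hk, z * (ζ ^ k)⁻¹, ?_, by field_simp⟩
  rw [mul_pow, inv_pow, ← pow_mul, mul_comm k, pow_mul, hkz]
  exact mul_inv_cancel₀ (hkz ▸ pow_ne_zero _ (pow_ne_zero _ hζ0))

theorem IsPrimitiveRoot.eq_zero_of_pow_mul_eq_one (hζ : IsPrimitiveRoot ζ a) (hco : a.Coprime m)
    {k : ℕ} (hk : k < a) {w : K} (hw : w ^ m = 1) (h : ζ ^ k * w = 1) : k = 0 := by
  have : (ζ ^ m) ^ k = 1 := by
    rw [← pow_mul, mul_comm, pow_mul, ← one_pow m, ← h, mul_pow, hw, mul_one]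
  exact Nat.eq_zero_of_dvd_of_lt ((hζ.pow_of_coprime m hco.symm).pow_eq_one_iff_dvd k |>.1 this) hk

end Decomposition

theorem coeff_monomialSum_mul_prime_pow_eq_coeff_zero {L : Type*} [Field L] [CharZero L]
    {T : Multiset L} {p b m : ℕ} [NeZero m] (hp : p.Prime) (hpm : ¬ p ∣ m) {ζ ξ : L}
    (hζ : IsPrimitiveRoot ζ (p ^ (b + 1))) (hξ : IsPrimitiveRoot ξ m) {e : L → ℕ} {w : L → L}
    (he : ∀ z ∈ T, e z < p ^ (b + 1)) (hw : ∀ z ∈ T, w z ^ m = 1)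
    (hz : ∀ z ∈ T, ζ ^ e z * w z = z) (hsum : T.sum = 0) {t : ℕ} (ht : t < p) :
    (monomialSum T e w).coeff (t * p ^ b) = (monomialSum T e w).coeff 0 := by
  have : NeZero (p ^ (b + 1)) := ⟨pow_ne_zero _ hp.ne_zero⟩
  have hminpoly := hζ.minpoly_adjoin_eq_cyclotomic_of_coprime hξ
    ((hp.coprime_iff_not_dvd.2 hpm).pow_left _)
  have hlifts : monomialSum T e w ∈ lifts (algebraMap ℚ⟮ξ⟯ L) :=
    monomialSum_mem_lifts _ fun z hz => by
      obtain ⟨i, -, hi⟩ := hξ.eq_pow_of_pow_eq_one (hw z hz)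
      exact ⟨AdjoinSimple.gen ℚ ξ ^ i, by simp [hi]⟩
  have hroot : (monomialSum T e w).eval ζ = 0 := by
    rw [eval_monomialSum, ← hsum]
    conv_rhs => rw [← Multiset.map_id T]
    exact congrArg _ (Multiset.map_congr rfl fun z hzT => by rw [mul_comm, hz z hzT, id])
  simpa using coeff_add_mul_prime_pow_eq_coeff_of_lifts hp hminpoly hlifts
    (natDegree_monomialSum_lt (pow_pos hp.pos _) he) hroot (pow_pos hp.pos b) ht

section MinimalVanishing

variable {R : Type*} [CommRing R] {T : Multiset R} {p B : ℕ} {ζ : R} {e : R → ℕ} {w : R → R}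

theorem eq_of_le_of_sum_eq_zero_of_mem (hmin : ∀ S ≤ T, S.sum = 0 → S = 0 ∨ S = T)
    {S : Multiset R} (hS : S ≤ T) (hsum : S.sum = 0) {a : R} (ha : a ∈ S) : S = T :=
  (hmin S hS hsum).resolve_left (by rintro rfl; simp at ha)

theorem sum_filter_dvd_eq_zero [IsDomain R] (hp : 1 < p) (hB : 0 < B)
    (hη : IsPrimitiveRoot (ζ ^ B) p) (he : ∀ z ∈ T, e z < B * p)
    (hz : ∀ z ∈ T, ζ ^ e z * w z = z)
    (hper : ∀ t < p, (monomialSum T e w).coeff (t * B) = (monomialSum T e w).coeff 0) :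
    (T.filter (B ∣ e ·)).sum = 0 := by
  set E := monomialSum (T.filter (B ∣ e ·)) (e · / B) w
  have hE : ∀ t < p, E.coeff t = E.coeff 0 := fun t ht => by
    rw [coeff_monomialSum_filter_dvd hB, coeff_monomialSum_filter_dvd hB, hper t ht, zero_mul]
  have hdeg : E.natDegree < p := natDegree_monomialSum_lt (by omega) fun z hz =>
    Nat.div_lt_of_lt_mul (he z (Multiset.mem_of_mem_filter hz))
  rw [← hη.eval_eq_zero_of_coeff_eq hp hdeg hE, eval_monomialSum]
  conv_lhs => rw [← Multiset.map_id (T.filter _)]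
  refine congrArg _ (Multiset.map_congr rfl fun z hzU => ?_)
  obtain ⟨hzT, hdvd⟩ := Multiset.mem_filter.1 hzU
  rw [← pow_mul, Nat.mul_div_cancel' hdvd, mul_comm, hz z hzT, id]

theorem coeff_monomialSum_zero_ne_zero (hmin : ∀ S ≤ T, S.sum = 0 → S = 0 ∨ S = T)
    (hone : (1 : R) ∈ T) (he1 : e 1 = 0) (hz : ∀ z ∈ T, ζ ^ e z * w z = z)
    (hT : ∃ z ∈ T, e z ≠ 0) : (monomialSum T e w).coeff 0 ≠ 0 := by
  intro h0
  have hsum : (T.filter (e · = 0)).sum = 0 := by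
    rw [← h0, coeff_monomialSum]
    conv_lhs => rw [← Multiset.map_id (T.filter _)]
    refine congrArg _ (Multiset.map_congr rfl fun z hzV => ?_)
    obtain ⟨hzT, hez⟩ := Multiset.mem_filter.1 hzV
    simpa [hez] using (hz z hzT).symm
  obtain ⟨z, hzT, hez⟩ := hT
  have := eq_of_le_of_sum_eq_zero_of_mem hmin (Multiset.filter_le _ _) hsum
    (Multiset.mem_filter.2 ⟨hone, he1⟩)
  exact hez (Multiset.filter_eq_self.1 this z hzT)

theorem eq_map_range_pow_of_minimal [IsDomain R] (hmin : ∀ S ≤ T, S.sum = 0 → S = 0 ∨ S = T)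
    (hone : (1 : R) ∈ T) (hcard : Multiset.card T = p) (hp : 1 < p) (hB : 0 < B)
    (hη : IsPrimitiveRoot (ζ ^ B) p) (he : ∀ z ∈ T, e z < B * p)
    (hz : ∀ z ∈ T, ζ ^ e z * w z = z) (he1 : e 1 = 0) (hw1 : w 1 = 1) (hT : ∃ z ∈ T, e z ≠ 0)
    (hper : ∀ t < p, (monomialSum T e w).coeff (t * B) = (monomialSum T e w).coeff 0) :
    T = (Multiset.range p).map ((ζ ^ B) ^ ·) := by
  have hU : T.filter (B ∣ e ·) = T := eq_of_le_of_sum_eq_zero_of_mem hmin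
    (Multiset.filter_le _ _) (sum_filter_dvd_eq_zero hp hB hη he hz hper)
    (Multiset.mem_filter.2 ⟨hone, he1 ▸ dvd_zero B⟩)
  set E := monomialSum T (e · / B) w
  have hE : ∀ t < p, E.coeff t = (monomialSum T e w).coeff 0 := fun t ht => by
    have := coeff_monomialSum_filter_dvd (s := T) (e := e) (w := w) hB t
    rw [hU] at this
    rw [this, hper t ht]
  have hmap : T.map (e · / B) = Multiset.range p :=
    map_eq_range_of_coeff_monomialSum_ne_zero hcard fun t ht =>
      (hE t ht).symm ▸ coeff_monomialSum_zero_ne_zero hmin hone he1 hz hT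
  have hnodup : (T.map (e · / B)).Nodup := hmap ▸ Multiset.nodup_range p
  have hw : ∀ z ∈ T, w z = 1 := fun z hz => calc
    w z = E.coeff (e z / B) := (coeff_monomialSum_of_nodup hnodup hz).symm
    _ = E.coeff (e 1 / B) := by
      rw [hE _ (Multiset.mem_range.1 (hmap ▸ Multiset.mem_map_of_mem _ hz)), he1, Nat.zero_div,
        hE 0 (by omega)]
    _ = 1 := by rw [coeff_monomialSum_of_nodup hnodup hone, hw1]
  calc T = T.map fun z => (ζ ^ B) ^ (e z / B) := by
        conv_lhs => rw [← Multiset.map_id T]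
        refine Multiset.map_congr rfl fun z hzT => ?_
        rw [← pow_mul, Nat.mul_div_cancel' (Multiset.filter_eq_self.1 hU z hzT), ← mul_one (_ ^ _),
          ← hw z hzT, hz z hzT, id]
    _ = (Multiset.range p).map ((ζ ^ B) ^ ·) := by rw [← hmap, Multiset.map_map]; rfl

end MinimalVanishing

/-- If a minimal vanishing sum of roots of unity of prime weight `d`
contains `1` and `d` divides the lcm `n` of the orders of its elements,
then the sum consists of all `d`-th roots of unity (each with multiplicity
one), and `n = d`. -/
theorem minimal_vanishing_sum_prime_weight (T : Multiset ℂ)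
    (hroots : ∀ z ∈ T, ∃ m : ℕ, 0 < m ∧ z ^ m = 1)
    (hsum : T.sum = 0)
    (hmin : ∀ S ≤ T, S.sum = 0 → S = 0 ∨ S = T)
    (hone : (1 : ℂ) ∈ T)
    (hd : (Multiset.card T).Prime)
    (hdvd : Multiset.card T ∣ (T.map orderOf).lcm) :
    T = Polynomial.nthRoots (Multiset.card T) (1 : ℂ) ∧
      (T.map orderOf).lcm = Multiset.card T := by
  set p := Multiset.card T
  set n := (T.map orderOf).lcm
  have hn0 : n ≠ 0 := Multiset.lcm_map_orderOf_ne_zero hroots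
  obtain ⟨k, m, hpm, hn⟩ := Nat.exists_eq_pow_mul_and_not_dvd hn0 p hd.ne_one
  obtain ⟨b, rfl⟩ : ∃ b, k = b + 1 :=
    Nat.exists_eq_succ_of_ne_zero (by rintro rfl; exact hpm (by simpa [hn] using hdvd))
  have : NeZero m := ⟨by rintro rfl; simp [hn] at hn0⟩
  have : NeZero (p ^ (b + 1)) := ⟨pow_ne_zero _ hd.ne_zero⟩
  have hco : (p ^ (b + 1)).Coprime m := (hd.coprime_iff_not_dvd.2 hpm).pow_left _
  obtain ⟨ζ, hζ⟩ : ∃ ζ : ℂ, IsPrimitiveRoot ζ (p ^ (b + 1)) :=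
    ⟨_, Complex.isPrimitiveRoot_exp _ (NeZero.ne _)⟩
  choose! e he w hw hz using fun z hzT => hζ.exists_pow_mul_eq hco
    (Multiset.lcm_map_orderOf_dvd_iff.1 hn.dvd z hzT)
  have he1 : e 1 = 0 := hζ.eq_zero_of_pow_mul_eq_one hco (he 1 hone) (hw 1 hone) (hz 1 hone)
  have hT : ∃ z ∈ T, e z ≠ 0 := by
    by_contra! h
    refine hpm (hdvd.trans (Multiset.lcm_map_orderOf_dvd_iff.2 fun z hzT => ?_))
    rw [← hz z hzT, h z hzT, pow_zero, one_mul, hw z hzT]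
  have hη : IsPrimitiveRoot (ζ ^ p ^ b) p := hζ.pow (pow_pos hd.pos _) (pow_succ p b)
  have hTeq := eq_map_range_pow_of_minimal hmin hone rfl hd.one_lt (pow_pos hd.pos b) hη
    (fun z hzT => pow_succ p b ▸ he z hzT) hz he1 (by simpa [he1] using hz 1 hone) hT
    fun t ht => coeff_monomialSum_mul_prime_pow_eq_coeff_zero hd hpm hζ
      (Complex.isPrimitiveRoot_exp m (NeZero.ne m)) he hw hz hsum ht
  have hTroots : T = nthRoots p 1 := by
    rw [hη.nthRoots_eq (one_pow p)]
    simpa using hTeq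
  refine ⟨hTroots, Nat.dvd_antisymm (Multiset.lcm_map_orderOf_dvd_iff.2 fun z hzT => ?_) hdvd⟩
  exact (mem_nthRoots hd.pos).1 (hTroots ▸ hzT)
end

section
/- Every minimal vanishing sum of roots of unity of weight d with 1 ≤ d < 6 has d prime (d ∈ {2,3,5}) and equals {αζ : ζ^d = 1} for some fixed root of unity α, i.e., it is a common scalar multiple of the full set of d-th roots of unity. -/
/-!
On the unit circle `z⁻¹ = conj z`, so conjugating a relation `a + b + c = 0` or
`a + b + c + d = 0` between roots of unity gives a second, symmetric one. Together they show
that three terms are a rotated copy of the cube roots of unity and that four terms contain a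
vanishing pair; this settles the weights at most `4`.

Weight `5` goes by induction on a common order `n = p m` (`p` prime) of the roots. Fix a
primitive `n`-th root `ζ` and split `T` into `p` fibers `x ^ j • Rⱼ` with `Rⱼ ⊆ μ_m`, so that
`0 = ∑ⱼ (∑ Rⱼ) x ^ j` with coefficients in `ℚ(ζ ^ p) = ℚ(μ_m)`. If `p ∣ m`, take `x = ζ`, of
degree `p` over `ℚ(ζ ^ p)`: all fiber sums vanish, so by minimality `T` lies in one coset of
`μ_m` and the induction hypothesis applies. If `p ∤ m`, take `x = ζ ^ m`, a primitive `p`-th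
root of unity of degree `p - 1` over `ℚ(ζ ^ p)`, whose only relation is
`1 + x + ⋯ + x ^ (p - 1) = 0`: the fiber sums are all equal. If they vanish we descend as
before; otherwise all `p` fibers are nonempty, so `p ≤ 5`; `p = 5` is the claim, and `p = 3`
contradicts the small weights. The remaining case `n ∣ 2` leaves only `±1`, whose minimal
vanishing sums have weight `2`.
-/

open Polynomial IntermediateField Module Finset

def IsMinimalVanishing {M : Type*} [AddCommMonoid M] (T : Multiset M) : Prop :=
  T.sum = 0 ∧ ∀ S ≤ T, S.sum = 0 → S = 0 ∨ S = T

namespace Multiset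

theorem sum_map_const_mul {R : Type*} [Semiring R] (S : Multiset R) (u : R) :
    (S.map (u * ·)).sum = u * S.sum := by
  simpa using sum_map_mul_left (s := S) (f := id) (a := u)

theorem exists_pow_eq_one {M : Type*} [CommMonoid M] {T : Multiset M}
    (h : ∀ z ∈ T, ∃ m, 0 < m ∧ z ^ m = 1) : ∃ n, 0 < n ∧ ∀ z ∈ T, z ^ n = 1 := by
  induction T using Multiset.induction_on with
  | empty => exact ⟨1, one_pos, by simp⟩
  | cons a s ih =>
    obtain ⟨n, hn, hs⟩ := ih fun z hz => h z (mem_cons_of_mem hz)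
    obtain ⟨m, hm, ha⟩ := h a (mem_cons_self a s)
    refine ⟨m * n, Nat.mul_pos hm hn, fun z hz => ?_⟩
    rcases mem_cons.1 hz with rfl | hz
    · rw [pow_mul, ha, one_pow]
    · rw [mul_comm, pow_mul, hs z hz, one_pow]

theorem exists_sum_map_eq {α β : Type*} {T : Multiset α} {p : ℕ} {P : β → Prop}
    (f : ℕ → β → α) (h : ∀ z ∈ T, ∃ j < p, ∃ w, P w ∧ f j w = z) :
    ∃ R : ℕ → Multiset β, ∑ j ∈ Finset.range p, (R j).map (f j) = T ∧ ∀ j, ∀ w ∈ R j, P w := by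
  induction T using Multiset.induction_on with
  | empty => exact ⟨0, by simp, by simp⟩
  | cons a s ih =>
    obtain ⟨R, hRs, hRP⟩ := ih fun z hz => h z (mem_cons_of_mem hz)
    obtain ⟨j₀, hj₀, w, hw, rfl⟩ := h _ (mem_cons_self _ _)
    refine ⟨fun j => R j + if j = j₀ then {w} else 0, ?_, fun j v hv => ?_⟩
    · rw [← hRs]
      simp only [map_add, Finset.sum_add_distrib, apply_ite (map _), map_singleton, map_zero,
        Finset.sum_ite_eq', Finset.mem_range, hj₀, if_true, add_comm _ {_}, singleton_add]
    · rcases mem_add.mp hv with hv | hv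
      · exact hRP j v hv
      · split_ifs at hv <;> simp_all

end Multiset

namespace IsMinimalVanishing

variable {M : Type*} [AddCommMonoid M] {T : Multiset M}

theorem card_eq_of_le (hT : IsMinimalVanishing T) {S : Multiset M} (hS : S ≤ T)
    (hS0 : S.sum = 0) (hne : S ≠ 0) : Multiset.card S = Multiset.card T :=
  congrArg _ ((hT.2 S hS hS0).resolve_left hne)

theorem exists_eq_of_sum_eq {ι : Type*} (hT : IsMinimalVanishing T) (hT0 : T ≠ 0)
    {s : Finset ι} {F : ι → Multiset M} (hF : ∑ j ∈ s, F j = T)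
    (hF0 : ∀ j ∈ s, (F j).sum = 0) : ∃ j ∈ s, F j = T := by
  by_contra! h
  refine hT0 (hF ▸ Finset.sum_eq_zero fun j hj => ?_)
  have hle : F j ≤ T := hF ▸ single_le_sum (fun _ _ => Multiset.zero_le _) hj
  exact (hT.2 _ hle (hF0 j hj)).resolve_right (h j hj)

theorem of_map_mul {K : Type*} [DivisionRing K] {T : Multiset K} {u : K} (hu : u ≠ 0)
    (hT : IsMinimalVanishing (T.map (u * ·))) : IsMinimalVanishing T := by
  refine ⟨?_, fun S hS hS0 => ?_⟩
  · simpa [Multiset.sum_map_const_mul, hu] using hT.1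
  · have h := hT.2 (S.map (u * ·)) (Multiset.map_le_map hS)
      (by simp [Multiset.sum_map_const_mul, hS0])
    simpa only [Multiset.map_eq_zero, (Multiset.map_injective (mul_right_injective₀ hu)).eq_iff]
      using h

end IsMinimalVanishing

namespace Complex

theorem isPrimitiveRoot_div_of_norm_add_eq_one {a b : ℂ} (ha : ‖a‖ = 1) (hb : ‖b‖ = 1)
    (hab : ‖a + b‖ = 1) : IsPrimitiveRoot (b / a) 3 := by
  have ha0 : a ≠ 0 := by rintro rfl; simp at ha
  have hb0 : b ≠ 0 := by rintro rfl; simp at hb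
  have hab0 : a + b ≠ 0 := by intro h; simp [h] at hab
  have h : a⁻¹ + b⁻¹ = (a + b)⁻¹ := by
    rw [RCLike.inv_eq_conj ha, RCLike.inv_eq_conj hb, RCLike.inv_eq_conj hab, map_add]
  field_simp at h
  have hω : (b / a) ^ 2 + b / a + 1 = 0 := by
    field_simp
    linear_combination h
  have : Fact (Nat.Prime 3) := ⟨Nat.prime_three⟩
  refine IsPrimitiveRoot.iff_orderOf.mpr (orderOf_eq_prime ?_ fun h1 => ?_)
  · linear_combination (b / a - 1) * hω
  · rw [h1] at hω
    norm_num at hω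

theorem add_mul_add_mul_add_eq_zero_of_norm_eq_one {a b c : ℂ} (ha : ‖a‖ = 1) (hb : ‖b‖ = 1)
    (hc : ‖c‖ = 1) (habc : ‖a + b + c‖ = 1) : (a + b) * (a + c) * (b + c) = 0 := by
  have ha0 : a ≠ 0 := by rintro rfl; simp at ha
  have hb0 : b ≠ 0 := by rintro rfl; simp at hb
  have hc0 : c ≠ 0 := by rintro rfl; simp at hc
  have habc0 : a + b + c ≠ 0 := by intro h; simp [h] at habc
  have h : a⁻¹ + b⁻¹ + c⁻¹ = (a + b + c)⁻¹ := by
    rw [RCLike.inv_eq_conj ha, RCLike.inv_eq_conj hb, RCLike.inv_eq_conj hc,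
      RCLike.inv_eq_conj habc, map_add, map_add]
  field_simp at h
  linear_combination h

theorem three_dvd_of_norm_add_eq_one {a b : ℂ} {m : ℕ} (ha : a ^ m = 1) (hb : b ^ m = 1)
    (hab : ‖a + b‖ = 1) : 3 ∣ m := by
  rcases eq_or_ne m 0 with rfl | hm
  · exact dvd_zero 3
  have hω := isPrimitiveRoot_div_of_norm_add_eq_one (norm_eq_one_of_pow_eq_one ha hm)
    (norm_eq_one_of_pow_eq_one hb hm) hab
  exact hω.dvd_of_pow_eq_one m (by rw [div_pow, ha, hb, div_one])

end Complex

theorem Multiset.exists_le_card_eq_two_sum_eq_zero {S : Multiset ℂ} (hS : ∀ z ∈ S, ‖z‖ = 1)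
    (hcard : Multiset.card S = 3) (hsum : ‖S.sum‖ = 1) :
    ∃ P ≤ S, Multiset.card P = 2 ∧ P.sum = 0 := by
  obtain ⟨a, b, c, rfl⟩ := card_eq_three.1 hcard
  simp only [insert_eq_cons, mem_cons, mem_singleton, forall_eq_or_imp, forall_eq, sum_cons,
    sum_singleton] at hS hsum
  rcases mul_eq_zero.1 (Complex.add_mul_add_mul_add_eq_zero_of_norm_eq_one hS.1 hS.2.1 hS.2.2
    (by rwa [add_assoc])) with h | h
  · rcases mul_eq_zero.1 h with h | h
    · exact ⟨{a, b}, cons_le_cons a (singleton_le.2 (mem_cons_self b _)), rfl, by simpa using h⟩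
    · exact ⟨{a, c}, cons_le_cons a (le_cons_self _ b), rfl, by simpa using h⟩
  · exact ⟨{b, c}, le_cons_self _ a, rfl, by simpa using h⟩

namespace IntermediateField

variable {F E : Type*} [Field F] [Field E] [Algebra F E]

theorem eq_zero_of_sum_mul_pow_eq_zero (K : IntermediateField F E) {x : E} {N : ℕ}
    (hN : N ≤ (minpoly K x).natDegree) {c : ℕ → E} (hc : ∀ j, c j ∈ K)
    (h : ∑ j ∈ range N, c j * x ^ j = 0) : ∀ j < N, c j = 0 := by
  have hli : LinearIndependent K fun i : Fin N => x ^ (i : ℕ) :=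
    (linearIndependent_pow x).comp (Fin.castLE hN) (Fin.castLE_injective hN)
  intro j hj
  have := Fintype.linearIndependent_iff.mp hli (fun i => ⟨c i, hc i⟩)
    (by rw [← h, ← Fin.sum_univ_eq_sum_range (fun j => c j * x ^ j)]; rfl) ⟨j, hj⟩
  exact congrArg Subtype.val this

theorem eq_of_sum_mul_pow_eq_zero (K : IntermediateField F E) {x : E} {q : ℕ}
    (hq : q ≤ (minpoly K x).natDegree) (hx : ∑ j ∈ range (q + 1), x ^ j = 0) {c : ℕ → E}
    (hc : ∀ j, c j ∈ K) (h : ∑ j ∈ range (q + 1), c j * x ^ j = 0) :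
    ∀ j < q + 1, c j = c q := by
  have hrel : ∑ j ∈ range q, (c j - c q) * x ^ j = 0 := by
    have : ∑ j ∈ range (q + 1), (c j - c q) * x ^ j = 0 := by
      simp only [sub_mul, sum_sub_distrib, h, ← mul_sum, hx, mul_zero, sub_zero]
    rwa [sum_range_succ, sub_self, zero_mul, add_zero] at this
  intro j hj
  rcases Nat.lt_succ_iff_lt_or_eq.mp hj with hj | rfl
  · exact sub_eq_zero.mp
      (K.eq_zero_of_sum_mul_pow_eq_zero hq (fun j => sub_mem (hc j) (hc q)) hrel j hj)
  · rfl

theorem natDegree_minpoly_mul_finrank (b : E) {x : E} (hx : IsIntegral F x) :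
    (minpoly F⟮b⟯ x).natDegree * finrank F F⟮b⟯ = finrank F F⟮b, x⟯ := by
  rw [← adjoin.finrank hx.tower_top, ← adjoin_simple_adjoin_simple, mul_comm]
  exact finrank_mul_finrank F F⟮b⟯ F⟮b⟯⟮x⟯

theorem mem_adjoin_pow_pow_of_coprime (x : E) {a b : ℕ} (hab : a.Coprime b) :
    x ∈ F⟮x ^ a, x ^ b⟯ := by
  rcases eq_or_ne x 0 with rfl | hx
  · exact zero_mem _
  have hbezout : (a : ℤ) * a.gcdA b + b * a.gcdB b = 1 := by
    rw [← Nat.gcd_eq_gcd_ab, hab, Nat.cast_one]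
  have hx_eq : x = (x ^ a) ^ a.gcdA b * (x ^ b) ^ a.gcdB b := by
    rw [← zpow_natCast, ← zpow_natCast, ← zpow_mul, ← zpow_mul, ← zpow_add₀ hx, hbezout,
      zpow_one]
  have hxa : x ^ a ∈ F⟮x ^ a, x ^ b⟯ := subset_adjoin F _ (Set.mem_insert _ _)
  have hxb : x ^ b ∈ F⟮x ^ a, x ^ b⟯ := subset_adjoin F _ (Set.mem_insert_of_mem _ rfl)
  have h := mul_mem (zpow_mem hxa (a.gcdA b)) (zpow_mem hxb (a.gcdB b))
  rwa [← hx_eq] at h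

end IntermediateField

namespace IsPrimitiveRoot

theorem sum_mem_adjoin {F E : Type*} [Field F] [Field E] [Algebra F E] {m : ℕ} {η : E}
    (hm : 0 < m) (hη : IsPrimitiveRoot η m) {S : Multiset E} (hS : ∀ w ∈ S, w ^ m = 1) :
    S.sum ∈ F⟮η⟯ := by
  have : NeZero m := ⟨hm.ne'⟩
  refine IntermediateField.multiset_sum_mem _ _ fun w hw => ?_
  obtain ⟨i, -, rfl⟩ := hη.eq_pow_of_pow_eq_one (hS w hw)
  exact pow_mem (mem_adjoin_simple_self F η) i

variable {ζ : ℂ}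

theorem finrank_adjoin_rat {n : ℕ} (hn : 0 < n) (h : IsPrimitiveRoot ζ n) :
    finrank ℚ ℚ⟮ζ⟯ = n.totient := by
  rw [adjoin.finrank (h.isIntegral hn).tower_top, ← cyclotomic_eq_minpoly_rat h hn,
    natDegree_cyclotomic]

theorem natDegree_minpoly_pow_mul_totient {p m k : ℕ} (hp : 0 < p) (hm : 0 < m)
    (h : IsPrimitiveRoot ζ (p * m)) (hgen : ζ ∈ ℚ⟮ζ ^ p, ζ ^ k⟯) :
    (minpoly ℚ⟮ζ ^ p⟯ (ζ ^ k)).natDegree * m.totient = (p * m).totient := by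
  have hn : 0 < p * m := Nat.mul_pos hp hm
  have hadj : ℚ⟮ζ ^ p, ζ ^ k⟯ = ℚ⟮ζ⟯ := by
    refine le_antisymm ?_ (adjoin_simple_le_iff.mpr hgen)
    rw [adjoin_le_iff, Set.insert_subset_iff, Set.singleton_subset_iff]
    exact ⟨pow_mem (mem_adjoin_simple_self ℚ ζ) p, pow_mem (mem_adjoin_simple_self ℚ ζ) k⟩
  rw [← (h.pow hn rfl).finrank_adjoin_rat hm,
    natDegree_minpoly_mul_finrank _ ((h.isIntegral hn).tower_top.pow k), hadj,
    h.finrank_adjoin_rat hn]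

end IsPrimitiveRoot

section Fibers

variable {T : Multiset ℂ} {R : ℕ → Multiset ℂ} {x : ℂ} {p m : ℕ}

theorem sum_eq_sum_fibers (hR : ∑ j ∈ range p, (R j).map (x ^ j * ·) = T) :
    T.sum = ∑ j ∈ range p, (R j).sum * x ^ j := by
  rw [← hR, Multiset.sum_sum]
  exact sum_congr rfl fun j _ => by rw [Multiset.sum_map_const_mul, mul_comm]

theorem card_eq_sum_card_fibers (hR : ∑ j ∈ range p, (R j).map (x ^ j * ·) = T) :
    Multiset.card T = ∑ j ∈ range p, Multiset.card (R j) := by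
  simp only [← hR, Multiset.card_sum, Multiset.card_map]

theorem IsMinimalVanishing.exists_eq_map_of_fibers (hT : IsMinimalVanishing T)
    (hT0 : T ≠ 0) (hx : x ≠ 0) (hR : ∑ j ∈ range p, (R j).map (x ^ j * ·) = T)
    (hRm : ∀ j, ∀ w ∈ R j, w ^ m = 1) (hR0 : ∀ j < p, (R j).sum = 0) :
    ∃ u ≠ (0 : ℂ), ∃ S : Multiset ℂ, (∀ w ∈ S, w ^ m = 1) ∧ T = S.map (u * ·) := by
  obtain ⟨j, -, hj⟩ := hT.exists_eq_of_sum_eq hT0 hR fun j hj => by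
    rw [Multiset.sum_map_const_mul, hR0 j (mem_range.1 hj), mul_zero]
  exact ⟨x ^ j, pow_ne_zero j hx, R j, hRm j, hj.symm⟩

theorem IsMinimalVanishing.exists_eq_map_of_prime_dvd (hT : IsMinimalVanishing T)
    (hT0 : T ≠ 0) (hp : p.Prime) (hm : 0 < m) (hpm : p ∣ m) (hTn : ∀ z ∈ T, z ^ (p * m) = 1) :
    ∃ u ≠ (0 : ℂ), ∃ S : Multiset ℂ, (∀ w ∈ S, w ^ m = 1) ∧ T = S.map (u * ·) := by
  have hn : p * m ≠ 0 := (Nat.mul_pos hp.pos hm).ne'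
  have : NeZero (p * m) := ⟨hn⟩
  obtain ⟨ζ, hζ⟩ : ∃ ζ : ℂ, IsPrimitiveRoot ζ (p * m) := ⟨_, Complex.isPrimitiveRoot_exp _ hn⟩
  obtain ⟨R, hR, hRm⟩ := Multiset.exists_sum_map_eq (p := p) (P := (· ^ m = 1))
    (fun j w => ζ ^ j * w) fun z hz => by
      obtain ⟨a, -, rfl⟩ := hζ.eq_pow_of_pow_eq_one (hTn z hz)
      refine ⟨a % p, Nat.mod_lt _ hp.pos, (ζ ^ p) ^ (a / p), ?_, ?_⟩
      · rw [← pow_mul, ← pow_mul, mul_left_comm, mul_comm, pow_mul, hζ.pow_eq_one, one_pow]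
      · rw [← pow_mul, ← pow_add, Nat.mod_add_div]
  have hdeg : (minpoly ℚ⟮ζ ^ p⟯ ζ).natDegree = p := by
    have h := hζ.natDegree_minpoly_pow_mul_totient (k := 1) hp.pos hm
      (by rw [pow_one]; exact subset_adjoin ℚ _ (Set.mem_insert_of_mem _ rfl))
    rw [pow_one, Nat.totient_mul_of_prime_of_dvd hp hpm] at h
    exact Nat.eq_of_mul_eq_mul_right (Nat.totient_pos.2 hm) h
  refine hT.exists_eq_map_of_fibers hT0 (hζ.ne_zero hn) hR hRm ?_
  exact ℚ⟮ζ ^ p⟯.eq_zero_of_sum_mul_pow_eq_zero hdeg.ge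
    (fun j => (hζ.pow (Nat.pos_of_ne_zero hn) rfl).sum_mem_adjoin hm (hRm j))
    (by rw [← sum_eq_sum_fibers hR, hT.1])

theorem IsMinimalVanishing.exists_eq_map_or_fibers_of_coprime (hT : IsMinimalVanishing T)
    (hT0 : T ≠ 0) (hp : p.Prime) (hm : 0 < m) (hpm : p.Coprime m)
    (hTn : ∀ z ∈ T, z ^ (p * m) = 1) :
    (∃ u ≠ (0 : ℂ), ∃ S : Multiset ℂ, (∀ w ∈ S, w ^ m = 1) ∧ T = S.map (u * ·)) ∨
    ∃ ξ : ℂ, IsPrimitiveRoot ξ p ∧ ∃ R : ℕ → Multiset ℂ, ∃ c ≠ (0 : ℂ),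
      ∑ j ∈ range p, (R j).map (ξ ^ j * ·) = T ∧ (∀ j, ∀ w ∈ R j, w ^ m = 1) ∧
      ∀ j < p, (R j).sum = c := by
  have hn : p * m ≠ 0 := (Nat.mul_pos hp.pos hm).ne'
  have : NeZero p := ⟨hp.ne_zero⟩
  obtain ⟨ζ, hζ⟩ : ∃ ζ : ℂ, IsPrimitiveRoot ζ (p * m) := ⟨_, Complex.isPrimitiveRoot_exp _ hn⟩
  have hξ : IsPrimitiveRoot (ζ ^ m) p := hζ.pow (Nat.pos_of_ne_zero hn) (mul_comm p m)
  have hξ0 : ζ ^ m ≠ 0 := hξ.ne_zero hp.ne_zero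
  obtain ⟨R, hR, hRm⟩ := Multiset.exists_sum_map_eq (p := p) (P := (· ^ m = 1))
    (fun j w => (ζ ^ m) ^ j * w) fun z hz => by
      obtain ⟨j, hj, hzj⟩ := (hξ.pow_of_coprime m hpm.symm).eq_pow_of_pow_eq_one
        (show (z ^ m) ^ p = 1 by rw [← pow_mul, mul_comm, hTn z hz])
      refine ⟨j, hj, z / (ζ ^ m) ^ j, ?_, mul_div_cancel₀ _ (pow_ne_zero _ hξ0)⟩
      rw [div_pow, ← hzj, pow_right_comm, div_self (pow_ne_zero _ (pow_ne_zero _ hξ0))]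
  have hdeg : (minpoly ℚ⟮ζ ^ p⟯ (ζ ^ m)).natDegree = p - 1 := by
    have h := hζ.natDegree_minpoly_pow_mul_totient hp.pos hm (mem_adjoin_pow_pow_of_coprime ζ hpm)
    rw [Nat.totient_mul hpm, Nat.totient_prime hp] at h
    exact Nat.eq_of_mul_eq_mul_right (Nat.totient_pos.2 hm) h
  obtain ⟨q, rfl⟩ : ∃ q, p = q + 1 := ⟨p - 1, (Nat.sub_add_cancel hp.one_le).symm⟩
  have hc := ℚ⟮ζ ^ (q + 1)⟯.eq_of_sum_mul_pow_eq_zero (hdeg ▸ le_rfl)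
    (hξ.geom_sum_eq_zero hp.one_lt)
    (fun j => (hζ.pow (Nat.pos_of_ne_zero hn) rfl).sum_mem_adjoin hm (hRm j))
    (by rw [← sum_eq_sum_fibers hR, hT.1])
  by_cases hc0 : (R q).sum = 0
  · exact .inl <| hT.exists_eq_map_of_fibers hT0 hξ0 hR hRm fun j hj => (hc j hj).trans hc0
  · exact .inr ⟨ζ ^ m, hξ, R, _, hc0, hR, hRm, hc⟩

end Fibers

theorem exists_eq_map_nthRoots_of_card_eq_two {T : Multiset ℂ} (hsum : T.sum = 0)
    (hcard : Multiset.card T = 2) : ∃ α : ℂ, T = (nthRoots 2 (1 : ℂ)).map (α * ·) := by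
  obtain ⟨a, b, rfl⟩ := Multiset.card_eq_two.1 hcard
  obtain rfl : b = -a := eq_neg_of_add_eq_zero_right (by simpa using hsum)
  refine ⟨a, ?_⟩
  rw [(IsPrimitiveRoot.neg_one 0 (by norm_num)).nthRoots_eq (one_pow 2), Multiset.map_map]
  change _ = {_, _}
  simp

theorem exists_eq_map_nthRoots_of_card_eq_three {T : Multiset ℂ} (hT : ∀ z ∈ T, ‖z‖ = 1)
    (hsum : T.sum = 0) (hcard : Multiset.card T = 3) :
    ∃ α : ℂ, T = (nthRoots 3 (1 : ℂ)).map (α * ·) := by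
  obtain ⟨a, b, c, rfl⟩ := Multiset.card_eq_three.1 hcard
  simp only [Multiset.insert_eq_cons, Multiset.mem_cons, Multiset.mem_singleton,
    forall_eq_or_imp, forall_eq, Multiset.sum_cons, Multiset.sum_singleton] at hT hsum
  have ha : a ≠ 0 := by rintro rfl; simp at hT
  obtain ⟨ω, hω, rfl⟩ : ∃ ω, IsPrimitiveRoot ω 3 ∧ b = a * ω :=
    ⟨b / a, Complex.isPrimitiveRoot_div_of_norm_add_eq_one hT.1 hT.2.1
      (by rw [show a + b = -c by linear_combination hsum, norm_neg, hT.2.2]),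
      (mul_div_cancel₀ b ha).symm⟩
  have hgeom := hω.geom_sum_eq_zero (by norm_num)
  simp only [sum_range_succ, sum_range_zero, zero_add, pow_zero, pow_one] at hgeom
  obtain rfl : c = a * ω ^ 2 := by linear_combination hsum - a * hgeom
  refine ⟨a, ?_⟩
  rw [hω.nthRoots_eq (one_pow 3), Multiset.map_map]
  change _ = {_, _, _}
  simp

theorem IsMinimalVanishing.card_ne_four {T : Multiset ℂ} (hT : IsMinimalVanishing T)
    (hunit : ∀ z ∈ T, ‖z‖ = 1) : Multiset.card T ≠ 4 := by
  intro h4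
  obtain ⟨a, ha⟩ := Multiset.card_pos_iff_exists_mem.1 (by omega : 0 < Multiset.card T)
  obtain ⟨S, rfl⟩ := Multiset.exists_cons_of_mem ha
  have hS : S.sum = -a := by
    have := hT.1
    rw [Multiset.sum_cons] at this
    linear_combination this
  obtain ⟨P, hPS, hP2, hP0⟩ := Multiset.exists_le_card_eq_two_sum_eq_zero
    (fun z hz => hunit z (Multiset.mem_cons_of_mem hz)) (by simpa using h4)
    (by rw [hS, norm_neg, hunit a ha])
  have := hT.card_eq_of_le (hPS.trans (Multiset.le_cons_self S a)) hP0
    (Multiset.card_pos.1 (by omega))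
  omega

theorem IsMinimalVanishing.card_eq_two_of_sq_eq_one {T : Multiset ℂ} (hT : IsMinimalVanishing T)
    (hT0 : T ≠ 0) (hT2 : ∀ z ∈ T, z ^ 2 = 1) : Multiset.card T = 2 := by
  have hne : ∀ z ∈ T, z ≠ 0 := fun z hz h => by simpa [h] using hT2 z hz
  have hneg : ∀ s ∈ T, -s ∈ T := by
    intro s hs
    by_contra hns
    have hrep : T = Multiset.replicate (Multiset.card T) s := Multiset.eq_replicate_card.2
      fun z hz => ((sq_eq_sq_iff_eq_or_eq_neg.1 ((hT2 z hz).trans (hT2 s hs).symm)).resolve_right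
        fun h => hns (h ▸ hz))
    have hsum := hT.1
    rw [hrep, Multiset.sum_replicate, nsmul_eq_mul] at hsum
    exact mul_ne_zero (Nat.cast_ne_zero.2 (mt Multiset.card_eq_zero.1 hT0)) (hne s hs) hsum
  obtain ⟨s, hs⟩ := Multiset.exists_mem_of_ne_zero hT0
  have hpair : {s, -s} ≤ T := (Multiset.le_iff_subset (by simp [self_ne_neg.2 (hne s hs)])).2
    (by simp [Multiset.cons_subset, hs, hneg s hs])
  simpa using (hT.card_eq_of_le hpair (by simp) (by simp)).symm

section NonvanishingFibers

variable {T : Multiset ℂ} {R : ℕ → Multiset ℂ} {ξ c : ℂ} {p m : ℕ}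

theorem eq_map_nthRoots_of_fibers (hξ : IsPrimitiveRoot ξ p)
    (hR : ∑ j ∈ range p, (R j).map (ξ ^ j * ·) = T) (hc : ∀ j < p, (R j).sum = c) (hc0 : c ≠ 0)
    (hcard : Multiset.card T = p) : T = (nthRoots p (1 : ℂ)).map (c * ·) := by
  have hcardR : ∀ j ∈ range p, 1 = Multiset.card (R j) := by
    refine (sum_eq_sum_iff_of_le fun j hj => Multiset.card_pos.2 fun h0 => ?_).1 ?_
    · exact hc0 (by rw [← hc j (mem_range.1 hj), h0, Multiset.sum_zero])
    · rw [← card_eq_sum_card_fibers hR, hcard, sum_const, card_range, smul_eq_mul, mul_one]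
  have hRc : ∀ j ∈ range p, R j = {c} := fun j hj => by
    obtain ⟨w, hw⟩ := Multiset.card_eq_one.1 (hcardR j hj).symm
    rw [hw, ← hc j (mem_range.1 hj), hw, Multiset.sum_singleton]
  rw [hξ.nthRoots_eq (one_pow p), Multiset.map_map, ← hR, sum_congr rfl fun j hj => by
    rw [hRc j hj, Multiset.map_singleton], sum_eq_multiset_sum, range_val]
  conv_rhs => rw [← Multiset.sum_map_singleton (Multiset.map _ _), Multiset.map_map]
  exact congrArg _ (Multiset.map_congr rfl fun j _ => by simp [mul_comm])

-- Some fiber is a singleton, so `c` is a root of unity. A fiber of size two then holds two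
-- `m`-th roots of unity whose ratio is a primitive cube root of unity; one of size three holds
-- a vanishing pair.
theorem IsMinimalVanishing.false_of_three_fibers (hT : IsMinimalVanishing T)
    (hcard : Multiset.card T = 5) (hm : ¬ 3 ∣ m) (hR : ∑ j ∈ range 3, (R j).map (ξ ^ j * ·) = T)
    (hRm : ∀ j, ∀ w ∈ R j, w ^ m = 1) (hc : ∀ j < 3, (R j).sum = c) (hc0 : c ≠ 0) : False := by
  have hunit : ∀ j, ∀ w ∈ R j, ‖w‖ = 1 := fun j w hw =>
    Complex.norm_eq_one_of_pow_eq_one (hRm j w hw) (by rintro rfl; exact hm (dvd_zero 3))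
  have hpos : ∀ j < 3, 0 < Multiset.card (R j) := fun j hj => Multiset.card_pos.2 fun h0 =>
    hc0 (by rw [← hc j hj, h0, Multiset.sum_zero])
  have hsum5 := (card_eq_sum_card_fibers hR).symm.trans hcard
  simp only [sum_range_succ, sum_range_zero, zero_add] at hsum5
  have h0 := hpos 0 (by norm_num)
  have h1 := hpos 1 (by norm_num)
  have h2 := hpos 2 (by norm_num)
  have hcu : ‖c‖ = 1 := by
    obtain ⟨j, hj, hj1⟩ : ∃ j < 3, Multiset.card (R j) = 1 := by
      rcases (by omega : Multiset.card (R 0) = 1 ∨ Multiset.card (R 1) = 1 ∨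
        Multiset.card (R 2) = 1) with h | h | h
      exacts [⟨0, by norm_num, h⟩, ⟨1, by norm_num, h⟩, ⟨2, by norm_num, h⟩]
    obtain ⟨w, hw⟩ := Multiset.card_eq_one.1 hj1
    have hwc := hc j hj
    rw [hw, Multiset.sum_singleton] at hwc
    exact hwc ▸ hunit j w (hw ▸ Multiset.mem_singleton_self w)
  obtain ⟨j, hj, hj23⟩ : ∃ j < 3, Multiset.card (R j) = 2 ∨ Multiset.card (R j) = 3 := by
    rcases (by omega : (Multiset.card (R 0) = 2 ∨ Multiset.card (R 0) = 3) ∨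
      (Multiset.card (R 1) = 2 ∨ Multiset.card (R 1) = 3) ∨
      (Multiset.card (R 2) = 2 ∨ Multiset.card (R 2) = 3)) with h | h | h
    exacts [⟨0, by norm_num, h⟩, ⟨1, by norm_num, h⟩, ⟨2, by norm_num, h⟩]
  rcases hj23 with hj2 | hj3
  · obtain ⟨a, b, hab⟩ := Multiset.card_eq_two.1 hj2
    have hsum := hc j hj
    rw [hab, Multiset.insert_eq_cons, Multiset.sum_cons, Multiset.sum_singleton] at hsum
    exact hm (Complex.three_dvd_of_norm_add_eq_one (hRm j a (by simp [hab]))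
      (hRm j b (by simp [hab])) (hsum ▸ hcu))
  · obtain ⟨P, hPR, hP2, hP0⟩ :=
      Multiset.exists_le_card_eq_two_sum_eq_zero (hunit j) hj3 (hc j hj ▸ hcu)
    have hPT : P.map (ξ ^ j * ·) ≤ T := (Multiset.map_le_map hPR).trans
      (hR ▸ single_le_sum (fun _ _ => Multiset.zero_le _) (mem_range.2 hj))
    have := hT.card_eq_of_le hPT (by rw [Multiset.sum_map_const_mul, hP0, mul_zero])
      (by simp [← Multiset.card_pos, hP2])
    simp [hP2, hcard] at this

theorem IsMinimalVanishing.eq_map_nthRoots_five_of_fibers (hT : IsMinimalVanishing T)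
    (hcard : Multiset.card T = 5) (hp : p.Prime) (hodd : Odd p) (hpm : ¬ p ∣ m)
    (hξ : IsPrimitiveRoot ξ p) (hR : ∑ j ∈ range p, (R j).map (ξ ^ j * ·) = T)
    (hRm : ∀ j, ∀ w ∈ R j, w ^ m = 1) (hc : ∀ j < p, (R j).sum = c) (hc0 : c ≠ 0) :
    T = (nthRoots 5 (1 : ℂ)).map (c * ·) := by
  have hp5 : p ≤ 5 := by
    rw [← hcard, card_eq_sum_card_fibers hR]
    calc p = ∑ j ∈ range p, 1 := by simp
      _ ≤ _ := sum_le_sum fun j hj => Multiset.card_pos.2 fun h0 =>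
        hc0 (by rw [← hc j (mem_range.1 hj), h0, Multiset.sum_zero])
  obtain rfl | rfl : p = 3 ∨ p = 5 := by
    interval_cases p <;> simp_all +decide
  · exact (hT.false_of_three_fibers hcard hpm hR hRm hc hc0).elim
  · exact eq_map_nthRoots_of_fibers hξ hR hc hc0 hcard

end NonvanishingFibers

theorem IsMinimalVanishing.exists_eq_map_nthRoots_of_card_eq_five {T : Multiset ℂ}
    (hT : IsMinimalVanishing T) (hcard : Multiset.card T = 5) {n : ℕ} (hn : 0 < n)
    (hTn : ∀ z ∈ T, z ^ n = 1) : ∃ α : ℂ, T = (nthRoots 5 (1 : ℂ)).map (α * ·) := by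
  induction n using Nat.strong_induction_on generalizing T with
  | _ n ih =>
  have hT0 : T ≠ 0 := by rintro rfl; simp at hcard
  have descend : ∀ m < n, 0 < m →
      (∃ u ≠ (0 : ℂ), ∃ S : Multiset ℂ, (∀ w ∈ S, w ^ m = 1) ∧ T = S.map (u * ·)) →
      ∃ α : ℂ, T = (nthRoots 5 (1 : ℂ)).map (α * ·) := by
    rintro m hmn hm ⟨u, hu, S, hS, rfl⟩
    obtain ⟨α, rfl⟩ := ih m hmn (hT.of_map_mul hu) (by simpa using hcard) hm hS
    exact ⟨u * α, by simp [Multiset.map_map, mul_assoc]⟩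
  rcases Nat.eq_two_pow_or_exists_odd_prime_and_dvd n with ⟨k, rfl⟩ | ⟨p, hp, ⟨m, rfl⟩, hodd⟩
  · rcases Nat.lt_or_ge k 2 with hk | hk
    · have hT2 : ∀ z ∈ T, z ^ 2 = 1 := fun z hz => by
        obtain ⟨d, hd⟩ := pow_dvd_pow 2 (Nat.le_of_lt_succ hk)
        rw [pow_one] at hd
        rw [hd, pow_mul, hTn z hz, one_pow]
      exact absurd (hT.card_eq_two_of_sq_eq_one hT0 hT2) (by omega)
    · obtain ⟨k, rfl⟩ := Nat.exists_eq_add_of_le' hk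
      rw [pow_succ'] at hTn
      exact descend _ (Nat.pow_lt_pow_right (by norm_num) (by omega)) (by positivity)
        (hT.exists_eq_map_of_prime_dvd hT0 Nat.prime_two (by positivity)
          (dvd_pow_self 2 (by omega)) hTn)
  · have hm : 0 < m := Nat.pos_of_mul_pos_left hn
    have hmn : m < p * m := (Nat.lt_mul_iff_one_lt_left hm).2 hp.one_lt
    by_cases hpm : p ∣ m
    · exact descend m hmn hm (hT.exists_eq_map_of_prime_dvd hT0 hp hm hpm hTn)
    rcases hT.exists_eq_map_or_fibers_of_coprime hT0 hp hm
      ((Nat.Prime.coprime_iff_not_dvd hp).2 hpm) hTn with h | ⟨ξ, hξ, R, c, hc0, hR, hRm, hc⟩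
    · exact descend m hmn hm h
    · exact ⟨c, hT.eq_map_nthRoots_five_of_fibers hcard hp hodd hpm hξ hR hRm hc hc0⟩

/-- Every minimal vanishing sum of roots of unity of weight `d` with
`1 ≤ d < 6` has `d` prime, and is a common root-of-unity multiple of the
full multiset of `d`-th roots of unity. -/
theorem small_minimal_vanishing_sums (T : Multiset ℂ)
    (hroots : ∀ z ∈ T, ∃ m : ℕ, 0 < m ∧ z ^ m = 1)
    (hsum : T.sum = 0)
    (hmin : ∀ S ≤ T, S.sum = 0 → S = 0 ∨ S = T)
    (h1 : 1 ≤ Multiset.card T) (h6 : Multiset.card T < 6) :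
    (Multiset.card T).Prime ∧
    ∃ α : ℂ, (∃ m : ℕ, 0 < m ∧ α ^ m = 1) ∧
      T = (Polynomial.nthRoots (Multiset.card T) (1 : ℂ)).map (α * ·) := by
  have hT : IsMinimalVanishing T := ⟨hsum, hmin⟩
  obtain ⟨n, hn, hTn⟩ := Multiset.exists_pow_eq_one hroots
  have hunit : ∀ z ∈ T, ‖z‖ = 1 := fun z hz => Complex.norm_eq_one_of_pow_eq_one (hTn z hz) hn.ne'
  suffices h : (Multiset.card T).Prime ∧
      ∃ α : ℂ, T = (nthRoots (Multiset.card T) (1 : ℂ)).map (α * ·) by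
    obtain ⟨hp, α, hα⟩ := h
    refine ⟨hp, α, hroots α ?_, hα⟩
    rw [hα]
    exact Multiset.mem_map.2 ⟨1, (mem_nthRoots hp.pos).2 (one_pow _), mul_one α⟩
  interval_cases hd : Multiset.card T
  · obtain ⟨a, rfl⟩ := Multiset.card_eq_one.1 hd
    simp_all
  · exact ⟨Nat.prime_two, exists_eq_map_nthRoots_of_card_eq_two hsum hd⟩
  · exact ⟨Nat.prime_three, exists_eq_map_nthRoots_of_card_eq_three hunit hsum hd⟩
  · exact (hT.card_ne_four hunit hd).elim
  · exact ⟨Nat.prime_five, hT.exists_eq_map_nthRoots_of_card_eq_five hd hn hTn⟩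
end

section
/- Any minimal vanishing sum consisting solely of sixth roots of unity and containing 1 is, after the normalization that it contains 1, either the multiset {1, −1} or the multiset {1, ω, ω²} of all cube roots of unity. -/
open Complex Polynomial Finset

noncomputable def zz6 : ℂ := Complex.exp (2 * Real.pi * Complex.I / 6)

lemma zz6_prim : IsPrimitiveRoot zz6 6 := Complex.isPrimitiveRoot_exp 6 (by norm_num)

lemma zz6_cube : zz6 ^ 3 = -1 := by
  unfold zz6
  rw [← Complex.exp_nat_mul]
  have : (3 : ℂ) * (2 * Real.pi * Complex.I / 6) = Real.pi * Complex.I := by ring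
  rw [show ((3:ℕ):ℂ) = (3:ℂ) by norm_num, this, Complex.exp_pi_mul_I]

lemma zz6_quad : zz6 ^ 2 - zz6 + 1 = 0 := by
  have h3 : zz6 ^ 3 = -1 := zz6_cube
  have hne : zz6 + 1 ≠ 0 := by
    intro h
    have : zz6 ^ 2 = 1 := by
      rw [show zz6 = -1 from eq_neg_of_add_eq_zero_left h]; norm_num
    exact zz6_prim.pow_ne_one_of_pos_of_lt (by norm_num) (by norm_num) this
  have hmul : (zz6 + 1) * (zz6 ^ 2 - zz6 + 1) = 0 := by linear_combination h3
  rcases mul_eq_zero.mp hmul with h | h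
  · exact absurd h hne
  · exact h

lemma zz6_im : zz6.im ≠ 0 := by
  have h : zz6 = Complex.exp ((Real.pi / 3 : ℝ) * Complex.I) := by
    unfold zz6; congr 1; push_cast; ring
  rw [h, Complex.exp_ofReal_mul_I_im, Real.sin_pi_div_three]
  positivity

lemma zz6_indep (a b : ℤ) (h : (a : ℂ) + (b : ℂ) * zz6 = 0) : a = 0 ∧ b = 0 := by
  have him := congrArg Complex.im h
  simp [Complex.add_im, Complex.mul_im] at him
  have hb : (b : ℝ) = 0 := by
    rcases him with h' | h'
    · exact_mod_cast h'
    · exact absurd h' zz6_im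
  have hb' : b = 0 := by exact_mod_cast hb
  subst hb'
  simp at h
  exact ⟨by exact_mod_cast h, rfl⟩

lemma pair_le {a b : ℂ} {T : Multiset ℂ} (ha : a ∈ T) (hb : b ∈ T) (hab : a ≠ b) :
    ({a, b} : Multiset ℂ) ≤ T := by
  have hb' : b ∈ T.erase a := (Multiset.mem_erase_of_ne (Ne.symm hab)).mpr hb
  have : (a ::ₘ {b}) ≤ a ::ₘ T.erase a :=
    Multiset.cons_le_cons a (Multiset.singleton_le.mpr hb')
  rwa [Multiset.cons_erase ha] at this

lemma triple_le {a b c : ℂ} {T : Multiset ℂ} (ha : a ∈ T) (hb : b ∈ T) (hc : c ∈ T)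
    (hab : a ≠ b) (hac : a ≠ c) (hbc : b ≠ c) :
    ({a, b, c} : Multiset ℂ) ≤ T := by
  have hb' : b ∈ T.erase a := (Multiset.mem_erase_of_ne (Ne.symm hab)).mpr hb
  have hc' : c ∈ T.erase a := (Multiset.mem_erase_of_ne (Ne.symm hac)).mpr hc
  have h2 : ({b, c} : Multiset ℂ) ≤ T.erase a := pair_le hb' hc' hbc
  have : (a ::ₘ {b, c}) ≤ a ::ₘ T.erase a := Multiset.cons_le_cons a h2
  rwa [Multiset.cons_erase ha] at this

lemma sum_count_zz6 (T : Multiset ℂ) (h : ∀ z ∈ T, z ^ 6 = 1) :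
    T.sum = ∑ k ∈ Finset.range 6, (T.count (zz6 ^ k) : ℂ) * zz6 ^ k := by
  induction T using Multiset.induction with
  | empty => simp
  | cons a T ih =>
    obtain ⟨j, hj, hja⟩ := zz6_prim.eq_pow_of_pow_eq_one (h a (Multiset.mem_cons_self a T))
    have ih' := ih (fun z hz => h z (Multiset.mem_cons_of_mem hz))
    subst hja
    rw [Multiset.sum_cons, ih']
    have key : ∀ k ∈ Finset.range 6,
        ((zz6 ^ j ::ₘ T).count (zz6 ^ k) : ℂ) * zz6 ^ k
          = (T.count (zz6 ^ k) : ℂ) * zz6 ^ k + (if k = j then zz6 ^ k else 0) := by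
      intro k hk
      by_cases hkj : k = j
      · subst hkj
        simp [Multiset.count_cons]
        ring
      · have hne : zz6 ^ k ≠ zz6 ^ j := fun hh =>
          hkj (zz6_prim.pow_inj (Finset.mem_range.mp hk) hj hh)
        simp [Multiset.count_cons, hne, hkj]
    rw [Finset.sum_congr rfl key, Finset.sum_add_distrib, Finset.sum_ite_eq' (Finset.range 6) j (fun k => zz6 ^ k)]
    simp [Finset.mem_range.mpr hj]
    ring

/-- A minimal vanishing sum of sixth roots of unity containing `1` is either
`{1, -1}` or the multiset of all cube roots of unity. -/
theorem minimal_vanishing_sum_sixth_roots (T : Multiset ℂ)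
    (hroots : ∀ z ∈ T, z ^ 6 = 1)
    (hsum : T.sum = 0)
    (hmin : ∀ S ≤ T, S.sum = 0 → S = 0 ∨ S = T)
    (hone : (1 : ℂ) ∈ T) :
    T = ({1, -1} : Multiset ℂ) ∨ T = Polynomial.nthRoots 3 (1 : ℂ) := by
  set n0 := T.count (zz6 ^ 0) with hn0
  set n1 := T.count (zz6 ^ 1) with hn1
  set n2 := T.count (zz6 ^ 2) with hn2
  set n3 := T.count (zz6 ^ 3) with hn3
  set n4 := T.count (zz6 ^ 4) with hn4
  set n5 := T.count (zz6 ^ 5) with hn5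
  have hquad := zz6_quad
  have hE : (n0 : ℂ) * zz6 ^ 0 + n1 * zz6 ^ 1 + n2 * zz6 ^ 2 + n3 * zz6 ^ 3
      + n4 * zz6 ^ 4 + n5 * zz6 ^ 5 = 0 := by
    have := sum_count_zz6 T hroots
    rw [hsum] at this
    rw [Finset.sum_range_succ, Finset.sum_range_succ, Finset.sum_range_succ,
      Finset.sum_range_succ, Finset.sum_range_succ, Finset.sum_range_succ,
      Finset.sum_range_zero] at this
    linear_combination -this
  have hcomb : ((((n0 : ℤ) - n2 - n3 + n5 : ℤ)) : ℂ)
      + (((n1 : ℤ) + n2 - n4 - n5 : ℤ) : ℂ) * zz6 = 0 := by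
    push_cast
    linear_combination hE - ((n2 : ℂ) + (zz6 + 1) * n3 + (zz6 ^ 2 + zz6) * n4
      + (zz6 ^ 3 + zz6 ^ 2 - 1) * n5) * hquad
  obtain ⟨e1, e2⟩ := zz6_indep _ _ hcomb
  have hn0pos : 0 < n0 := by
    rw [hn0, pow_zero]
    exact Multiset.count_pos.mpr hone
  by_cases h3 : 0 < n3
  · -- -1 ∈ T, so T = {1, -1}
    left
    have hm1 : (-1 : ℂ) ∈ T := by
      have := Multiset.count_pos.mp h3
      rwa [zz6_cube] at this
    have hle : ({1, -1} : Multiset ℂ) ≤ T := pair_le hone hm1 (by norm_num)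
    rcases hmin _ hle (by simp) with h | h
    · simp at h
    · exact h.symm
  · -- n3 = 0
    have h3' : n3 = 0 := by omega
    have h4 : 0 < n4 := by omega
    have h2pos : 0 < n2 := by omega
    right
    have hm2 : zz6 ^ 2 ∈ T := Multiset.count_pos.mp h2pos
    have hm4 : zz6 ^ 4 ∈ T := Multiset.count_pos.mp h4
    have hd12 : (1 : ℂ) ≠ zz6 ^ 2 := by
      intro h
      have := zz6_prim.pow_inj (i := 0) (j := 2) (by norm_num) (by norm_num) (by rw [pow_zero]; exact h)
      omega
    have hd14 : (1 : ℂ) ≠ zz6 ^ 4 := by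
      intro h
      have := zz6_prim.pow_inj (i := 0) (j := 4) (by norm_num) (by norm_num) (by rw [pow_zero]; exact h)
      omega
    have hd24 : zz6 ^ 2 ≠ zz6 ^ 4 := by
      intro h
      have := zz6_prim.pow_inj (i := 2) (j := 4) (by norm_num) (by norm_num) h
      omega
    have hle : ({1, zz6 ^ 2, zz6 ^ 4} : Multiset ℂ) ≤ T :=
      triple_le hone hm2 hm4 hd12 hd14 hd24
    have hsum3 : ({1, zz6 ^ 2, zz6 ^ 4} : Multiset ℂ).sum = 0 := by
      simp [Multiset.sum_cons]
      linear_combination (zz6 ^ 2 + zz6 + 1) * hquad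
    have hT : T = ({1, zz6 ^ 2, zz6 ^ 4} : Multiset ℂ) := by
      rcases hmin _ hle hsum3 with h | h
      · simp at h
      · exact h.symm
    rw [hT]
    have h6 : zz6 ^ 6 = 1 := zz6_prim.pow_eq_one
    apply Multiset.eq_of_le_of_card_le
    · apply triple_le _ _ _ hd12 hd14 hd24 <;> rw [Polynomial.mem_nthRoots (by norm_num)]
      · norm_num
      · rw [← pow_mul]; norm_num [h6]
      · rw [← pow_mul]
        rw [show 4 * 3 = 6 * 2 by norm_num, pow_mul, h6, one_pow]
    · have := Polynomial.card_nthRoots 3 (1 : ℂ)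
      simpa using this
end

section
/- For every integer k ≥ 6, the sets 𝒜 = {0, 3, 5, k+3, k+4, k+5} ∪ {7, 8, ..., k} and ℬ = {0, 2, 4, 5, k+4, k+5} ∪ {7, 8, ..., k} of integers satisfy Δ(𝒜) = Δ(ℬ) as multisets of integers, where Δ(X) = {x − x' : x, x' ∈ X}. -/
/-!
Identify a finite multiset of integers with its generating Laurent polynomial `∑ tˣ`;
then `Δ(X)` corresponds to `X(t) X(t⁻¹)`, and a multiset is determined by its generating
polynomial. With `P = 1 - t² + t⁵` and `F = 1 + t² + t³ + ⋯ + tᵏ` one has `𝒜(t) = P(t) F(t)`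
and `ℬ(t) = t⁵ P(t⁻¹) F(t)`. Replacing `P` by its reflection `t⁵ P(t⁻¹)` does not change
`P(t) P(t⁻¹)`, so `Δ(𝒜) = Δ(ℬ)`.
-/

open LaurentPolynomial

namespace Multiset

noncomputable def toLaurent (R : Type*) [Semiring R] (m : Multiset ℤ) : R[T;T⁻¹] :=
  (m.map T).sum

variable {R : Type*} [Semiring R]

theorem coeff_toLaurent (m : Multiset ℤ) (n : ℤ) : (m.toLaurent R).coeff n = m.count n := by
  induction m using Multiset.induction_on with
  | empty => simp [toLaurent]
  | cons a m ih =>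
    simp only [toLaurent, map_cons, sum_cons, AddMonoidAlgebra.coeff_add] at ih ⊢
    rw [Finsupp.add_apply, ih, T_apply, count_cons, Nat.cast_add, add_comm]
    by_cases h : a = n
    · simp [h]
    · simp [h, Ne.symm h]

theorem toLaurent_injective [CharZero R] : Function.Injective (toLaurent R) := fun m m' h =>
  Multiset.ext.2 fun n => Nat.cast_injective (R := R) <| by
    rw [← coeff_toLaurent, h, coeff_toLaurent]

end Multiset

namespace Finset

def differences {G : Type*} [Sub G] (s : Finset G) : Multiset G :=
  (s ×ˢ s).val.map fun p => p.1 - p.2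

theorem toLaurent_differences {R : Type*} [CommSemiring R] (s : Finset ℤ) :
    s.differences.toLaurent R = (∑ x ∈ s, T x) * invert (∑ x ∈ s, T x) := by
  simp only [differences, Multiset.toLaurent, Multiset.map_map, Function.comp_def]
  rw [map_sum, sum_mul_sum, ← sum_product']
  simp only [invert_T, ← T_add, ← sub_eq_add_neg]
  rfl

theorem differences_eq_of_sum_T_eq_mul {R : Type*} [CommSemiring R] [CharZero R]
    {A B : Finset ℤ} {P Q F : R[T;T⁻¹]} (hA : ∑ x ∈ A, T x = P * F)
    (hB : ∑ x ∈ B, T x = Q * F) (hPQ : P * invert P = Q * invert Q) :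
    A.differences = B.differences := by
  apply Multiset.toLaurent_injective (R := R)
  rw [toLaurent_differences, toLaurent_differences, hA, hB, map_mul, map_mul]
  calc P * F * (invert P * invert F) = P * invert P * (F * invert F) := by ring
    _ = Q * F * (invert Q * invert F) := by rw [hPQ]; ring

end Finset

namespace LaurentPolynomial

variable {R : Type*}

theorem T_ofNat [Semiring R] (n : ℕ) [n.AtLeastTwo] :
    (T ofNat(n) : R[T;T⁻¹]) = T 1 ^ (ofNat(n) : ℕ) := by
  rw [T_pow, mul_one]; rfl

theorem T_mul_invert_mul_invert [CommSemiring R] (n : ℤ) (P : R[T;T⁻¹]) :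
    T n * invert P * invert (T n * invert P) = P * invert P := by
  have hT : (T n * T (-n) : R[T;T⁻¹]) = 1 := by rw [← T_add, add_neg_cancel, T_zero]
  rw [map_mul, invert_T, involutive_invert P]
  calc T n * invert P * (T (-n) * P) = T n * T (-n) * (P * invert P) := by ring
    _ = P * invert P := by rw [hT, one_mul]

theorem sub_one_mul_sum_Icc_T [Ring R] {a b : ℤ} (h : a ≤ b + 1) :
    (T 1 - 1) * ∑ i ∈ Finset.Icc a b, (T i : R[T;T⁻¹]) = T (b + 1) - T a := by
  replace h : a - 1 ≤ b := by omega
  induction b, h using Int.leInduction with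
  | base => simp
  | succ b _ ih =>
    have hIcc : Finset.Icc a (b + 1) = insert (b + 1) (Finset.Icc a b) := by
      ext; simp only [Finset.mem_Icc, Finset.mem_insert]; omega
    rw [hIcc, Finset.sum_insert (by simp), mul_add, ih, sub_mul, one_mul, ← T_add, add_comm 1]
    abel

end LaurentPolynomial

section

variable {R : Type*} [CommSemiring R] {k : ℤ}

theorem sum_T_counterexample_left (hk : 6 ≤ k) :
    ∑ x ∈ ({0, 3, 5, k + 3, k + 4, k + 5} : Finset ℤ) ∪ Finset.Icc 7 k,
        (T x : R[T;T⁻¹]) =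
      1 + T 1 ^ 3 + T 1 ^ 5 + T k * (T 1 ^ 3 + T 1 ^ 4 + T 1 ^ 5) +
        ∑ i ∈ Finset.Icc 7 k, T i := by
  rw [Finset.sum_union, Finset.sum_insert, Finset.sum_insert, Finset.sum_insert,
    Finset.sum_insert, Finset.sum_insert, Finset.sum_singleton]
  · simp only [T_add, T_ofNat, T_zero]; ring
  all_goals
    simp only [Finset.mem_insert, Finset.mem_singleton, Finset.disjoint_left, Finset.mem_Icc]
    omega

theorem sum_T_counterexample_right (hk : 6 ≤ k) :
    ∑ x ∈ ({0, 2, 4, 5, k + 4, k + 5} : Finset ℤ) ∪ Finset.Icc 7 k, (T x : R[T;T⁻¹]) =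
      1 + T 1 ^ 2 + T 1 ^ 4 + T 1 ^ 5 + T k * (T 1 ^ 4 + T 1 ^ 5) +
        ∑ i ∈ Finset.Icc 7 k, T i := by
  rw [Finset.sum_union, Finset.sum_insert, Finset.sum_insert, Finset.sum_insert,
    Finset.sum_insert, Finset.sum_insert, Finset.sum_singleton]
  · simp only [T_add, T_ofNat, T_zero]; ring
  all_goals
    simp only [Finset.mem_insert, Finset.mem_singleton, Finset.disjoint_left, Finset.mem_Icc]
    omega

end

/-- For `k ≥ 6`, the sets `𝒜 = {0,3,5,k+3,k+4,k+5} ∪ {7,...,k}` and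
`ℬ = {0,2,4,5,k+4,k+5} ∪ {7,...,k}` have the same multisets of pairwise
differences. -/
theorem counterexample_same_differences (k : ℤ) (hk : 6 ≤ k)
    (A B : Finset ℤ)
    (hA : A = ({0, 3, 5, k + 3, k + 4, k + 5} : Finset ℤ) ∪ Finset.Icc 7 k)
    (hB : B = ({0, 2, 4, 5, k + 4, k + 5} : Finset ℤ) ∪ Finset.Icc 7 k) :
    ((A ×ˢ A).val.map fun p => p.1 - p.2)
      = ((B ×ˢ B).val.map fun p => p.1 - p.2) := by
  subst hA hB
  have hI := sub_one_mul_sum_Icc_T (R := ℤ) (show 7 ≤ k + 1 by omega)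
  set I := ∑ i ∈ Finset.Icc 7 k, (T i : ℤ[T;T⁻¹])
  simp only [T_add, T_ofNat] at hI
  have hQ : (1 - T 1 ^ 3 + T 1 ^ 5 : ℤ[T;T⁻¹]) = T 5 * invert (1 - T 1 ^ 2 + T 1 ^ 5) := by
    simp only [map_add, map_sub, map_one, invert_T, mul_add, mul_sub, mul_one, T_pow,
      ← T_add]
    norm_num [T_zero]
    abel
  refine Finset.differences_eq_of_sum_T_eq_mul
    (P := 1 - T 1 ^ 2 + T 1 ^ 5) (Q := 1 - T 1 ^ 3 + T 1 ^ 5)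
    (F := 1 + T 1 ^ 2 + T 1 ^ 3 + T 1 ^ 4 + T 1 ^ 5 + T 1 ^ 6 + I) ?_ ?_ ?_
  · rw [sum_T_counterexample_left hk]
    linear_combination (-(T 1 ^ 4 + T 1 ^ 3 + T 1 ^ 2)) * hI
  · rw [sum_T_counterexample_right hk]
    linear_combination (-(T 1 ^ 4 + T 1 ^ 3)) * hI
  · rw [hQ, LaurentPolynomial.T_mul_invert_mul_invert]
end
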